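/- arXiv:2402.00417 — 14 statements merged into one kernel-verified Lean document; each statement's English description precedes it below -/
import Mathlib

section
/- Let M be a monoid and d, b ∈ M with d·d = 1 and b·b = b. Then b = 1 follows from each of the following equations: (1) (d·b)^k = 1 with k > 0; (2) (d·b)^k = d with k > 0; (3) (d·b)^k · d = 1 with k > 0; (4) b·(d·b)^k = 1 with k ≥ 0; (5) b·(d·b)^k·d = 1 with k ≥ 0; (6) (d·b)^k·d = d with k > 0; (7) b·(d·b)^k = d with k ≥ 0; (8) b·(d·b)^k·d = d with k ≥ 0. Consequently, in each case the submonoid generated by {d, b} is generated by d alone (it is monogenic). -/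
private lemma idem_key {M : Type*} [Monoid M] {b z : M} (hb : b * b = b) (h : b * z = 1) :
    b = 1 := by
  have : b * (b * z) = b * z := by rw [← mul_assoc, hb]
  rwa [h, mul_one] at this

private lemma clos_key {M : Type*} [Monoid M] {d b : M} (h : b = 1) :
    Submonoid.closure ({d, b} : Set M) = Submonoid.closure ({d} : Set M) := by
  subst h
  apply le_antisymm
  · rw [Submonoid.closure_le]
    rintro x (rfl | rfl)
    · exact Submonoid.subset_closure rfl
    · exact one_mem _
  · exact Submonoid.closure_mono (by simp)

private lemma case4 {M : Type*} [Monoid M] {d b : M} (hb : b * b = b)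
    (k : ℕ) (h : b * (d * b) ^ k = 1) : b = 1 := idem_key hb h

private lemma case5 {M : Type*} [Monoid M] {d b : M} (hb : b * b = b)
    (k : ℕ) (h : b * (d * b) ^ k * d = 1) : b = 1 := by
  rw [mul_assoc] at h; exact idem_key hb h

private lemma case1 {M : Type*} [Monoid M] {d b : M} (hd : d * d = 1) (hb : b * b = b)
    (k : ℕ) (hk : 0 < k) (h : (d * b) ^ k = 1) : b = 1 := by
  obtain ⟨n, rfl⟩ := Nat.exists_eq_add_of_lt hk
  rw [zero_add, pow_succ', mul_assoc] at h
  -- d * (b * (d*b)^n) = 1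
  have h2 : b * (d * b) ^ n = d := by
    have := congrArg (d * ·) h
    simpa [← mul_assoc, hd] using this
  have h3 : b * ((d * b) ^ n * d) = 1 := by
    rw [← mul_assoc, h2, hd]
  exact idem_key hb h3

private lemma case3 {M : Type*} [Monoid M] {d b : M} (hd : d * d = 1) (hb : b * b = b)
    (k : ℕ) (hk : 0 < k) (h : (d * b) ^ k * d = 1) : b = 1 := by
  obtain ⟨n, rfl⟩ := Nat.exists_eq_add_of_lt hk
  rw [zero_add, pow_succ', mul_assoc, mul_assoc] at h
  -- d * (b * ((d*b)^n * d)) = 1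
  have h2 : b * ((d * b) ^ n * d) = d := by
    have := congrArg (d * ·) h
    simpa [← mul_assoc, hd] using this
  have h3 : b * ((d * b) ^ n * d * d) = 1 := by
    rw [← mul_assoc, h2, hd]
  exact idem_key hb h3
theorem stmt_1 {M : Type*} [Monoid M] (d b : M) (hd : d * d = 1) (hb : b * b = b) :
    (∀ k : ℕ, 0 < k → (d * b) ^ k = 1 →
        b = 1 ∧ Submonoid.closure ({d, b} : Set M) = Submonoid.closure ({d} : Set M)) ∧
    (∀ k : ℕ, 0 < k → (d * b) ^ k = d →
        b = 1 ∧ Submonoid.closure ({d, b} : Set M) = Submonoid.closure ({d} : Set M)) ∧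
    (∀ k : ℕ, 0 < k → (d * b) ^ k * d = 1 →
        b = 1 ∧ Submonoid.closure ({d, b} : Set M) = Submonoid.closure ({d} : Set M)) ∧
    (∀ k : ℕ, b * (d * b) ^ k = 1 →
        b = 1 ∧ Submonoid.closure ({d, b} : Set M) = Submonoid.closure ({d} : Set M)) ∧
    (∀ k : ℕ, b * (d * b) ^ k * d = 1 →
        b = 1 ∧ Submonoid.closure ({d, b} : Set M) = Submonoid.closure ({d} : Set M)) ∧
    (∀ k : ℕ, 0 < k → (d * b) ^ k * d = d →
        b = 1 ∧ Submonoid.closure ({d, b} : Set M) = Submonoid.closure ({d} : Set M)) ∧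
    (∀ k : ℕ, b * (d * b) ^ k = d →
        b = 1 ∧ Submonoid.closure ({d, b} : Set M) = Submonoid.closure ({d} : Set M)) ∧
    (∀ k : ℕ, b * (d * b) ^ k * d = d →
        b = 1 ∧ Submonoid.closure ({d, b} : Set M) = Submonoid.closure ({d} : Set M)) := by
  refine ⟨fun k hk h => ?_, fun k hk h => ?_, fun k hk h => ?_, fun k h => ?_,
    fun k h => ?_, fun k hk h => ?_, fun k h => ?_, fun k h => ?_⟩
  all_goals refine (fun hb1 => ⟨hb1, clos_key hb1⟩) ?_
  · exact case1 hd hb k hk h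
  · -- (d*b)^k = d ⇒ (d*b)^k * d = 1
    exact case3 hd hb k hk (by rw [h, hd])
  · exact case3 hd hb k hk h
  · exact case4 hb k h
  · exact case5 hb k h
  · -- (d*b)^k * d = d ⇒ (d*b)^k = 1
    refine case1 hd hb k hk ?_
    have := congrArg (· * d) h
    simpa [mul_assoc, hd] using this
  · -- b*(d*b)^k = d ⇒ b*(d*b)^k*d = 1
    exact case5 hb k (by rw [h, hd])
  · -- b*(d*b)^k*d = d ⇒ b*(d*b)^k = 1
    refine case4 (d := d) hb k ?_
    have := congrArg (· * d) h
    simpa [mul_assoc, hd] using this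
end

section
/- Let M be a monoid and d, b ∈ M with d·d = 1 and b·b = b, and let k > 0. Each of the following three equations implies (d·b)^k = (d·b)^(k+1): (i) (d·b)^k = (d·b)^k·d; (ii) (d·b)^k = (b·d)^(k-1)·b; (iii) (d·b)^k = (b·d)^(k+1). -/
theorem stmt_2 {M : Type*} [Monoid M] (d b : M) (hd : d * d = 1) (hb : b * b = b)
    (k : ℕ) (hk : 0 < k) :
    ((d * b) ^ k = (d * b) ^ k * d → (d * b) ^ k = (d * b) ^ (k + 1)) ∧
    ((d * b) ^ k = (b * d) ^ (k - 1) * b → (d * b) ^ k = (d * b) ^ (k + 1)) ∧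
    ((d * b) ^ k = (b * d) ^ (k + 1) → (d * b) ^ k = (d * b) ^ (k + 1)) := by
  -- semiconjugacy lemmas
  have s1 : ∀ n : ℕ, d * (b * d) ^ n = (d * b) ^ n * d := fun n =>
    (SemiconjBy.pow_right (mul_assoc d b d).symm n).eq
  have s2 : ∀ n : ℕ, b * (d * b) ^ n = (b * d) ^ n * b := fun n =>
    (SemiconjBy.pow_right (mul_assoc b d b).symm n).eq
  obtain ⟨m, rfl⟩ : ∃ m, k = m + 1 := ⟨k - 1, (Nat.succ_pred_eq_of_pos hk).symm⟩
  -- x^k * b = x^k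
  have xb : (d * b) ^ (m + 1) * b = (d * b) ^ (m + 1) := by
    rw [pow_succ, mul_assoc, mul_assoc, hb]
  refine ⟨?_, ?_, ?_⟩
  · intro h
    conv_rhs => rw [pow_succ]
    rw [← mul_assoc, ← h, xb]
  · intro h
    have key : (b * d) ^ (m + 1 - 1) * b = b * (d * b) ^ m := (s2 m).symm
    rw [key] at h
    have dx : d * (d * b) ^ (m + 1) = (d * b) ^ (m + 1) := by
      conv_lhs => rw [h]
      rw [← mul_assoc, ← pow_succ']
    have bx : b * (d * b) ^ (m + 1) = (d * b) ^ (m + 1) := by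
      conv_lhs => rw [h]
      rw [← mul_assoc, hb]
      exact h.symm
    calc (d * b) ^ (m + 1) = (d * b) * (d * b) ^ (m + 1) := by
          rw [mul_assoc, bx, dx]
      _ = (d * b) ^ (m + 1 + 1) := (pow_succ' _ _).symm
  · intro h
    set k := m + 1 with hkdef
    -- x^{k+1} = x^k * d = (b*d)^k * b
    have e1 : (d * b) ^ k * d = (b * d) ^ k * b := by
      rw [h, pow_succ, mul_assoc, mul_assoc, hd, mul_one]
    have e2 : (d * b) ^ (k + 1) = (b * d) ^ k * b := by
      rw [pow_succ, h, pow_succ, mul_assoc, mul_assoc, ← mul_assoc d d, hd,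
        one_mul, hb]
    have dx : d * (d * b) ^ k = (d * b) ^ k := by
      rw [h, s1 (k + 1), e2, mul_assoc, ← pow_succ]
    have bx : b * (d * b) ^ k = (d * b) ^ k := by
      rw [h, pow_succ', ← mul_assoc, ← mul_assoc, hb]
    calc (d * b) ^ k = (d * b) * (d * b) ^ k := by rw [mul_assoc, bx, dx]
      _ = (d * b) ^ (k + 1) := (pow_succ' _ _).symm
end

section
/- Let M be a monoid and d, b ∈ M with d·d = 1 and b·b = b, and let k > 0. Each of the following three equations implies (d·b)^k = (d·b)^(k+2): (i) (d·b)^k = (d·b)^(k+1)·d; (ii) (d·b)^k = (b·d)^k·b; (iii) (d·b)^k = (b·d)^k. -/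
theorem stmt_3 {M : Type*} [Monoid M] (d b : M) (hd : d * d = 1) (hb : b * b = b)
    (k : ℕ) (hk : 0 < k) :
    ((d * b) ^ k = (d * b) ^ (k + 1) * d → (d * b) ^ k = (d * b) ^ (k + 2)) ∧
    ((d * b) ^ k = (b * d) ^ k * b → (d * b) ^ k = (d * b) ^ (k + 2)) ∧
    ((d * b) ^ k = (b * d) ^ k → (d * b) ^ k = (d * b) ^ (k + 2)) := by
  obtain ⟨n, rfl⟩ : ∃ n, k = n + 1 := ⟨k - 1, (Nat.succ_pred_eq_of_pos hk).symm⟩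
  have hxb : (d * b) ^ (n + 1) * b = (d * b) ^ (n + 1) := by
    rw [pow_succ, mul_assoc, mul_assoc, hb]
  have hsemi : d * (b * d) ^ (n + 1) = (d * b) ^ (n + 1) * d :=
    (SemiconjBy.pow_right (by simp [SemiconjBy, mul_assoc]) (n + 1))
  have hsemi2 : b * (d * b) ^ (n + 1) = (b * d) ^ (n + 1) * b :=
    (SemiconjBy.pow_right (by simp [SemiconjBy, mul_assoc]) (n + 1))
  have e2 : n + 1 + 2 = (n + 1 + 1) + 1 := rfl
  refine ⟨?_, ?_, ?_⟩
  · intro h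
    have h1 : (d * b) ^ (n + 1) * d = (d * b) ^ (n + 1 + 1) := by
      rw [h, mul_assoc, hd, mul_one]
    rw [e2]
    calc (d * b) ^ (n + 1)
        = (d * b) ^ (n + 1) * b := hxb.symm
      _ = ((d * b) ^ (n + 1) * d) * (d * b) := by
          rw [mul_assoc, ← mul_assoc d d, hd, one_mul]
      _ = (d * b) ^ (n + 1 + 1) * (d * b) := by rw [h1]
      _ = (d * b) ^ (n + 1 + 1 + 1) := (pow_succ _ _).symm
  · intro h
    have hb1 : b * (d * b) ^ (n + 1) = (d * b) ^ (n + 1) := by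
      rw [hsemi2]; exact h.symm
    have hdx : d * (d * b) ^ (n + 1) = (d * b) ^ (n + 1 + 1) := by
      conv_lhs => rw [← hb1]
      rw [← mul_assoc, pow_succ' (d * b) (n + 1)]
    rw [e2]
    calc (d * b) ^ (n + 1)
        = 1 * (d * b) ^ (n + 1) := (one_mul _).symm
      _ = d * (d * (d * b) ^ (n + 1)) := by rw [← mul_assoc, hd]
      _ = d * ((d * b) ^ (n + 1) * (d * b)) := by rw [hdx, pow_succ]
      _ = (d * (d * b) ^ (n + 1)) * (d * b) := by rw [mul_assoc]
      _ = (d * b) ^ (n + 1 + 1) * (d * b) := by rw [hdx]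
      _ = (d * b) ^ (n + 1 + 1 + 1) := (pow_succ _ _).symm
  · intro h
    have h1 : (d * b) ^ (n + 1) = d * ((d * b) ^ (n + 1) * d) := by
      conv_lhs => rw [h]
      rw [← hsemi, ← mul_assoc, hd, one_mul]
    have hcomm : (d * b) ^ (n + 1) * d = d * (d * b) ^ (n + 1) := by
      conv_rhs => rw [h1]
      rw [← mul_assoc, ← mul_assoc, hd, one_mul]
    rw [e2]
    refine Eq.symm ?_
    calc (d * b) ^ (n + 1 + 1 + 1)
        = (d * b) ^ (n + 1 + 1) * (d * b) := pow_succ _ _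
      _ = ((d * b) ^ (n + 1) * (d * b)) * (d * b) := by rw [pow_succ]
      _ = (((d * b) ^ (n + 1) * d) * b) * (d * b) := by
          rw [mul_assoc ((d * b) ^ (n + 1)) d b]
      _ = ((d * (d * b) ^ (n + 1)) * b) * (d * b) := by rw [hcomm]
      _ = (d * ((d * b) ^ (n + 1) * b)) * (d * b) := by
          rw [mul_assoc d ((d * b) ^ (n + 1)) b]
      _ = (d * (d * b) ^ (n + 1)) * (d * b) := by rw [hxb]
      _ = ((d * b) ^ (n + 1) * d) * (d * b) := by rw [hcomm]
      _ = (d * b) ^ (n + 1) * ((d * d) * b) := by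
          rw [mul_assoc, ← mul_assoc d d b]
      _ = (d * b) ^ (n + 1) * b := by rw [hd, one_mul]
      _ = (d * b) ^ (n + 1) := hxb
end

section
/- Let M be a monoid and d, b ∈ M with d·d = 1 and b·b = b. Then: (a) for all k0 > 0, k1 > 0, if (d·b)^(k0) = (d·b)^(k1)·d then (d·b)^(k0) = (d·b)^(k0+1)·d; (b) for all k0 > 0 and k1 ≥ 0, if (d·b)^(k0) = b·(d·b)^(k1) then (d·b)^(k0) = (b·d)^(k0)·b; (c) for all k0 > 0 and k1 ≥ 0, if (d·b)^(k0) = b·(d·b)^(k1)·d then (d·b)^(k0) = (b·d)^(k0). -/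
theorem stmt_4 {M : Type*} [Monoid M] (d b : M) (hd : d * d = 1) (hb : b * b = b) :
    (∀ k0 k1 : ℕ, 0 < k0 → 0 < k1 →
      (d * b) ^ k0 = (d * b) ^ k1 * d → (d * b) ^ k0 = (d * b) ^ (k0 + 1) * d) ∧
    (∀ k0 k1 : ℕ, 0 < k0 →
      (d * b) ^ k0 = b * (d * b) ^ k1 → (d * b) ^ k0 = (b * d) ^ k0 * b) ∧
    (∀ k0 k1 : ℕ, 0 < k0 →
      (d * b) ^ k0 = b * (d * b) ^ k1 * d → (d * b) ^ k0 = (b * d) ^ k0) := by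
  -- commuting lemma: (d*b)^k * d = d * (b*d)^k
  have hcomm : ∀ k : ℕ, (d * b) ^ k * d = d * (b * d) ^ k := by
    intro k
    induction k with
    | zero => simp
    | succ n ih =>
      rw [pow_succ, pow_succ']
      calc (d * b) ^ n * (d * b) * d = (d * b) ^ n * d * (b * d) := by
            simp [mul_assoc]
        _ = d * (b * d) ^ n * (b * d) := by rw [ih]
        _ = d * ((b * d) ^ n * (b * d)) := by rw [mul_assoc]
        _ = d * ((b * d) * (b * d) ^ n) := by rw [← pow_succ, pow_succ']
  have hbd : ∀ k : ℕ, (b * d) ^ k * b = b * (d * b) ^ k := by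
    intro k
    induction k with
    | zero => simp
    | succ n ih =>
      rw [pow_succ', pow_succ']
      calc b * d * (b * d) ^ n * b = b * d * ((b * d) ^ n * b) := by rw [mul_assoc]
        _ = b * d * (b * (d * b) ^ n) := by rw [ih]
        _ = b * ((d * b) * (d * b) ^ n) := by simp [mul_assoc]
        _ = b * (d * b * (d * b) ^ n) := by rw [mul_assoc]
  have habs : ∀ k : ℕ, 0 < k → (d * b) ^ k * b = (d * b) ^ k := by
    intro k hk
    obtain ⟨m, rfl⟩ := Nat.exists_eq_add_of_lt hk
    simp only [zero_add, pow_succ]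
    rw [mul_assoc, mul_assoc, hb]
  have habsbd : ∀ k : ℕ, 0 < k → b * (b * d) ^ k = (b * d) ^ k := by
    intro k hk
    obtain ⟨m, rfl⟩ := Nat.exists_eq_add_of_lt hk
    simp only [zero_add, pow_succ']
    rw [← mul_assoc, ← mul_assoc, hb]
  refine ⟨?_, ?_, ?_⟩
  · intro k0 k1 hk0 hk1 h
    have h1 : (d * b) ^ k0 = (d * b) ^ (k1 + 1) := by
      calc (d * b) ^ k0 = (d * b) ^ k0 * b := (habs k0 hk0).symm
        _ = (d * b) ^ k1 * d * b := by rw [h]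
        _ = (d * b) ^ k1 * (d * b) := by rw [mul_assoc]
        _ = (d * b) ^ (k1 + 1) := by rw [pow_succ]
    have h2 : (d * b) ^ k0 * d = (d * b) ^ k1 := by
      rw [h, mul_assoc, hd, mul_one]
    calc (d * b) ^ k0 = (d * b) ^ (k1 + 1) := h1
      _ = (d * b) * (d * b) ^ k1 := by rw [pow_succ']
      _ = (d * b) * ((d * b) ^ k0 * d) := by rw [h2]
      _ = (d * b) * (d * b) ^ k0 * d := by simp [mul_assoc]
      _ = (d * b) ^ (k0 + 1) * d := by rw [← pow_succ']
  · intro k0 k1 hk0 h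
    have hb0 : b * (d * b) ^ k0 = (d * b) ^ k0 := by
      conv_lhs => rw [h, ← mul_assoc, hb]
      exact h.symm
    rw [hbd, hb0]
  · intro k0 k1 hk0 h
    have key : (d * b) ^ (k1 + 1) = (b * d) ^ k0 := by
      calc (d * b) ^ (k1 + 1) = (d * b) * (d * b) ^ k1 := by rw [pow_succ']
        _ = d * (b * (d * b) ^ k1 * d) * d := by
            rw [mul_assoc, mul_assoc, mul_assoc, hd, mul_one, ← mul_assoc]
        _ = d * ((d * b) ^ k0 * d) := by rw [← h, mul_assoc]
        _ = d * (d * (b * d) ^ k0) := by rw [hcomm]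
        _ = (d * d) * (b * d) ^ k0 := by rw [mul_assoc]
        _ = (b * d) ^ k0 := by rw [hd, one_mul]
    have h2 : (d * b) ^ k0 = b * (d * b) ^ (k1 + 1) := by
      calc (d * b) ^ k0 = (d * b) ^ k0 * b := (habs k0 hk0).symm
        _ = b * (d * b) ^ k1 * d * b := by rw [h]
        _ = b * ((d * b) ^ k1 * (d * b)) := by simp [mul_assoc]
        _ = b * (d * b) ^ (k1 + 1) := by rw [pow_succ]
    rw [h2, key, habsbd k0 hk0]
end

section
/- Let M be a monoid and d, b ∈ M with d·d = 1 and b·b = b. (a) For k0, k1 ≥ 1 with k0 ≤ k1: if k1 − k0 is odd then (d·b)^(k0) = (d·b)^(k1)·d holds if and only if (d·b)^(k0) = (d·b)^(k0+1)·d; if k1 − k0 is even then (d·b)^(k0) = (d·b)^(k1)·d holds if and only if (d·b)^(k0) = (d·b)^(k0)·d. (b) For k0 ≥ 1, k1 ≥ 0 with k0 ≤ k1 + 1: if k0 + k1 is odd then (d·b)^(k0) = (b·d)^(k1)·b holds if and only if (d·b)^(k0) = (b·d)^(k0−1)·b; if k0 + k1 is even then (d·b)^(k0) = (b·d)^(k1)·b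 holds if and only if (d·b)^(k0) = (b·d)^(k0)·b. (c) For k0, k1 ≥ 1 with k0 ≤ k1: if k1 − k0 is odd then (d·b)^(k0) = (b·d)^(k1) holds if and only if (d·b)^(k0) = (b·d)^(k0+1); if k1 − k0 is even then (d·b)^(k0) = (b·d)^(k1) holds if and only if (d·b)^(k0) = (b·d)^(k0). -/
namespace Stmt5Aux

variable {M : Type*} [Monoid M]

lemma pow_period {x : M} {k p : ℕ} (h : x ^ (k + p) = x ^ k) (t : ℕ) :
    x ^ (k + p * t) = x ^ k := by
  induction t with
  | zero => simp
  | succ n ih =>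
    have e : k + p * (n + 1) = k + p * n + p := by ring
    rw [e, pow_add, ih, ← pow_add, h]

lemma per2_even {x : M} {k n : ℕ} (h : x ^ (k + 2) = x ^ k)
    (hkn : k ≤ n) (he : Even (n - k)) : x ^ n = x ^ k := by
  obtain ⟨t, ht⟩ := he
  have hn : n = k + 2 * t := by omega
  rw [hn]; exact pow_period h t

lemma per2_odd {x : M} {k n : ℕ} (h : x ^ (k + 2) = x ^ k)
    (hkn : k ≤ n) (ho : Odd (n - k)) : x ^ n = x ^ (k + 1) := by
  obtain ⟨t, ht⟩ := ho
  have hn : n = (k + 2 * t) + 1 := by omega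
  rw [hn, pow_succ, pow_period h t, ← pow_succ]

lemma per1_all {x : M} {k : ℕ} (h : x ^ (k + 1) = x ^ k) {n : ℕ} (hn : k ≤ n) :
    x ^ n = x ^ k := by
  obtain ⟨j, rfl⟩ : ∃ j, n = k + j := ⟨n - k, by omega⟩
  simpa using pow_period (p := 1) h j

variable {d b : M}

lemma xb (hb : b * b = b) {k : ℕ} (hk : 1 ≤ k) : (d * b) ^ k * b = (d * b) ^ k := by
  obtain ⟨j, rfl⟩ : ∃ j, k = j + 1 := ⟨k - 1, by omega⟩
  rw [pow_succ, mul_assoc, mul_assoc, hb]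

lemma yb (hb : b * b = b) (k : ℕ) : (b * d) ^ k * b = b * (d * b) ^ k := by
  induction k with
  | zero => simp
  | succ n ih =>
    rw [pow_succ', mul_assoc, ih, pow_succ', ← mul_assoc, ← mul_assoc, mul_assoc b d b]

lemma ypow (hd : d * d = 1) (k : ℕ) : (b * d) ^ k = d * ((d * b) ^ k * d) := by
  induction k with
  | zero => simp [hd]
  | succ n ih =>
    calc (b * d) ^ (n + 1) = (b * d) * (b * d) ^ n := pow_succ' _ _
      _ = (b * d) * (d * ((d * b) ^ n * d)) := by rw [ih]
      _ = b * ((d * d) * ((d * b) ^ n * d)) := by rw [mul_assoc, ← mul_assoc d d]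
      _ = b * ((d * b) ^ n * d) := by rw [hd, one_mul]
      _ = ((d * d) * b) * ((d * b) ^ n * d) := by rw [hd, one_mul]
      _ = d * ((d * b) * ((d * b) ^ n * d)) := by rw [mul_assoc d d b, mul_assoc]
      _ = d * (((d * b) * (d * b) ^ n) * d) := by rw [← mul_assoc (d * b)]
      _ = d * ((d * b) ^ (n + 1) * d) := by rw [← pow_succ']

lemma E_of (hb : b * b = b) {k0 k1 : ℕ} (h : (d * b) ^ k0 = b * (d * b) ^ k1) :
    b * (d * b) ^ k0 = (d * b) ^ k0 := by
  conv_lhs => rw [h]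
  rw [← mul_assoc, hb, ← h]

lemma bpow {k0 : ℕ} (hE : b * (d * b) ^ k0 = (d * b) ^ k0) {n : ℕ} (hn : k0 ≤ n) :
    b * (d * b) ^ n = (d * b) ^ n := by
  obtain ⟨j, rfl⟩ : ∃ j, n = k0 + j := ⟨n - k0, by omega⟩
  rw [pow_add, ← mul_assoc, hE]

lemma P1 {k0 : ℕ} (hE : b * (d * b) ^ k0 = (d * b) ^ k0) :
    (d * b) ^ (k0 + 1) = d * (d * b) ^ k0 := by
  rw [pow_succ', mul_assoc, hE]

lemma per2E (hd : d * d = 1) {k0 : ℕ} (hE : b * (d * b) ^ k0 = (d * b) ^ k0) :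
    (d * b) ^ (k0 + 2) = (d * b) ^ k0 := by
  have h1 : b * (d * b) ^ (k0 + 1) = (d * b) ^ (k0 + 1) := bpow hE (by omega)
  calc (d * b) ^ (k0 + 2) = d * (d * b) ^ (k0 + 1) := P1 h1
    _ = d * (d * (d * b) ^ k0) := by rw [P1 hE]
    _ = (d * d) * (d * b) ^ k0 := by rw [mul_assoc]
    _ = (d * b) ^ k0 := by rw [hd, one_mul]

lemma dbp (hd : d * d = 1) {k : ℕ} (hk : 1 ≤ k) :
    d * (b * (d * b) ^ (k - 1)) = (d * b) ^ k := by
  obtain ⟨j, rfl⟩ : ∃ j, k = j + 1 := ⟨k - 1, by omega⟩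
  rw [Nat.add_sub_cancel, pow_succ', mul_assoc]

end Stmt5Aux

open Stmt5Aux in
theorem stmt_5 {M : Type*} [Monoid M] (d b : M) (hd : d * d = 1) (hb : b * b = b) :
    -- (a) eq01(k0,k1) ↔ eq01°(k0) or eq01•(k0), depending on parity of k1 - k0
    (∀ k0 k1 : ℕ, 1 ≤ k0 → k0 ≤ k1 →
      (Odd (k1 - k0) →
        ((d * b) ^ k0 = (d * b) ^ k1 * d ↔ (d * b) ^ k0 = (d * b) ^ (k0 + 1) * d)) ∧
      (Even (k1 - k0) →
        ((d * b) ^ k0 = (d * b) ^ k1 * d ↔ (d * b) ^ k0 = (d * b) ^ k0 * d))) ∧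
    -- (b) eq10(k0,k1) ↔ eq10•(k0) or eq10°(k0), depending on parity of k0 + k1
    (∀ k0 k1 : ℕ, 1 ≤ k0 → k0 ≤ k1 + 1 →
      (Odd (k0 + k1) →
        ((d * b) ^ k0 = (b * d) ^ k1 * b ↔ (d * b) ^ k0 = (b * d) ^ (k0 - 1) * b)) ∧
      (Even (k0 + k1) →
        ((d * b) ^ k0 = (b * d) ^ k1 * b ↔ (d * b) ^ k0 = (b * d) ^ k0 * b))) ∧
    -- (c) eq11(k0,k1) ↔ eq11•(k0) or eq11°(k0), depending on parity of k1 - k0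
    (∀ k0 k1 : ℕ, 1 ≤ k0 → k0 ≤ k1 →
      (Odd (k1 - k0) →
        ((d * b) ^ k0 = (b * d) ^ k1 ↔ (d * b) ^ k0 = (b * d) ^ (k0 + 1))) ∧
      (Even (k1 - k0) →
        ((d * b) ^ k0 = (b * d) ^ k1 ↔ (d * b) ^ k0 = (b * d) ^ k0))) := by
  refine ⟨?_, ?_, ?_⟩
  · -- part (a)
    intro k0 k1 hk0 hle
    have hk1 : 1 ≤ k1 := le_trans hk0 hle
    have A1 : ∀ {m : ℕ}, 1 ≤ m → (d * b) ^ k0 = (d * b) ^ m * d →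
        (d * b) ^ (k0 + 1) = (d * b) ^ m := by
      intro m hm h
      calc (d * b) ^ (k0 + 1) = (d * b) ^ k0 * (d * b) := pow_succ _ _
        _ = ((d * b) ^ m * d) * (d * b) := by rw [h]
        _ = (d * b) ^ m * ((d * d) * b) := by rw [mul_assoc, ← mul_assoc d d b]
        _ = (d * b) ^ m * b := by rw [hd, one_mul]
        _ = (d * b) ^ m := xb hb hm
    have A2 : ∀ {m : ℕ}, (d * b) ^ k0 = (d * b) ^ m * d →
        (d * b) ^ k0 = (d * b) ^ (m + 1) := by
      intro m h
      calc (d * b) ^ k0 = (d * b) ^ k0 * b := (xb hb hk0).symm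
        _ = ((d * b) ^ m * d) * b := by rw [h]
        _ = (d * b) ^ m * (d * b) := by rw [mul_assoc]
        _ = (d * b) ^ (m + 1) := (pow_succ _ _).symm
    refine ⟨fun ho => ⟨fun h => ?_, fun h => ?_⟩, fun he => ⟨fun h => ?_, fun h => ?_⟩⟩
    · -- odd forward
      have hA1 := A1 hk1 h
      rw [h, hA1]
    · -- odd backward : h : x^k0 = x^(k0+1) * d
      have hper : (d * b) ^ (k0 + 2) = (d * b) ^ k0 := (A2 h).symm
      have hx : (d * b) ^ k1 = (d * b) ^ (k0 + 1) := per2_odd hper hle ho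
      rw [hx]; exact h
    · -- even forward
      have hA1 := A1 hk1 h
      have hA2 := A2 h
      have hper : (d * b) ^ (k0 + 2) = (d * b) ^ k0 := by
        calc (d * b) ^ (k0 + 2) = (d * b) ^ (k0 + 1) * (d * b) := pow_succ _ _
          _ = (d * b) ^ k1 * (d * b) := by rw [hA1]
          _ = (d * b) ^ (k1 + 1) := (pow_succ _ _).symm
          _ = (d * b) ^ k0 := hA2.symm
      have hx : (d * b) ^ k1 = (d * b) ^ k0 := per2_even hper hle he
      calc (d * b) ^ k0 = (d * b) ^ k1 * d := h
        _ = (d * b) ^ k0 * d := by rw [hx]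
    · -- even backward : h : x^k0 = x^k0 * d
      have hstep : (d * b) ^ (k0 + 1) = (d * b) ^ k0 := (A2 h).symm
      have hx : (d * b) ^ k1 = (d * b) ^ k0 := per1_all hstep hle
      rw [hx]; exact h
  · -- part (b)
    intro k0 k1 hk0 hle
    simp only [yb hb]
    refine ⟨fun ho => ⟨fun h => ?_, fun h => ?_⟩, fun he => ⟨fun h => ?_, fun h => ?_⟩⟩
    · -- odd forward : h : x^k0 = b * x^k1, goal x^k0 = b * x^(k0-1)
      by_cases hc : k0 ≤ k1
      · have hE := E_of hb h
        have hper := per2E hd hE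
        have hm : Odd (k1 - k0) := by
          rw [Nat.odd_iff] at ho ⊢; omega
        have hx1 : (d * b) ^ k1 = (d * b) ^ (k0 + 1) := per2_odd hper hc hm
        have hstep : (d * b) ^ k0 = (d * b) ^ (k0 + 1) := by
          calc (d * b) ^ k0 = b * (d * b) ^ k1 := h
            _ = b * (d * b) ^ (k0 + 1) := by rw [hx1]
            _ = (d * b) ^ (k0 + 1) := bpow hE (by omega)
        have hdx : d * (d * b) ^ k0 = (d * b) ^ k0 := by
          calc d * (d * b) ^ k0 = (d * b) ^ (k0 + 1) := (P1 hE).symm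
            _ = (d * b) ^ k0 := hstep.symm
        calc (d * b) ^ k0 = d * (d * b) ^ k0 := hdx.symm
          _ = d * (d * (b * (d * b) ^ (k0 - 1))) := by rw [dbp hd hk0]
          _ = (d * d) * (b * (d * b) ^ (k0 - 1)) := by rw [mul_assoc]
          _ = b * (d * b) ^ (k0 - 1) := by rw [hd, one_mul]
      · rwa [show k0 - 1 = k1 by omega]
    · -- odd backward : h : x^k0 = b * x^(k0-1)
      have hE : b * (d * b) ^ k0 = (d * b) ^ k0 := E_of hb h
      have hdx : d * (d * b) ^ k0 = (d * b) ^ k0 := by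
        calc d * (d * b) ^ k0 = d * (b * (d * b) ^ (k0 - 1)) := by rw [← h]
          _ = (d * b) ^ k0 := dbp hd hk0
      have hstep : (d * b) ^ (k0 + 1) = (d * b) ^ k0 := (P1 hE).trans hdx
      by_cases hc : k0 ≤ k1
      · have hx : (d * b) ^ k1 = (d * b) ^ k0 := per1_all hstep hc
        calc (d * b) ^ k0 = b * (d * b) ^ k0 := hE.symm
          _ = b * (d * b) ^ k1 := by rw [hx]
      · rwa [show k0 - 1 = k1 by omega] at h
    · -- even forward
      exact (E_of hb h).symm
    · -- even backward : h : x^k0 = b * x^k0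
      have hc : k0 ≤ k1 := by
        rw [Nat.even_iff] at he; omega
      have hm : Even (k1 - k0) := by
        rw [Nat.even_iff] at he ⊢; omega
      have hper := per2E hd (E_of hb h)
      have hx : (d * b) ^ k1 = (d * b) ^ k0 := per2_even hper hc hm
      calc (d * b) ^ k0 = b * (d * b) ^ k0 := h
        _ = b * (d * b) ^ k1 := by rw [hx]
  · -- part (c)
    intro k0 k1 hk0 hle
    have h10 : ∀ {m : ℕ}, (d * b) ^ k0 = (b * d) ^ m → (d * b) ^ k0 = b * (d * b) ^ m := by
      intro m h
      calc (d * b) ^ k0 = (d * b) ^ k0 * b := (xb hb hk0).symm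
        _ = (b * d) ^ m * b := by rw [h]
        _ = b * (d * b) ^ m := yb hb m
    refine ⟨fun ho => ⟨fun h => ?_, fun h => ?_⟩, fun he => ⟨fun h => ?_, fun h => ?_⟩⟩
    · -- odd forward : h : x^k0 = y^k1
      have h' := h10 h
      have hE := E_of hb h'
      have hper := per2E hd hE
      have hx1 : (d * b) ^ k1 = (d * b) ^ (k0 + 1) := per2_odd hper hle ho
      have hstep : (d * b) ^ k0 = (d * b) ^ (k0 + 1) := by
        calc (d * b) ^ k0 = b * (d * b) ^ k1 := h'
          _ = b * (d * b) ^ (k0 + 1) := by rw [hx1]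
          _ = (d * b) ^ (k0 + 1) := bpow hE (by omega)
      have hxk : (d * b) ^ k1 = (d * b) ^ k0 := hx1.trans hstep.symm
      have hX : (d * b) ^ k0 = d * ((d * b) ^ k0 * d) := by
        calc (d * b) ^ k0 = (b * d) ^ k1 := h
          _ = d * ((d * b) ^ k1 * d) := ypow hd k1
          _ = d * ((d * b) ^ k0 * d) := by rw [hxk]
      calc (d * b) ^ k0 = d * ((d * b) ^ k0 * d) := hX
        _ = d * ((d * b) ^ (k0 + 1) * d) := by rw [← hstep]
        _ = (b * d) ^ (k0 + 1) := (ypow hd _).symm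
    · -- odd backward : h : x^k0 = y^(k0+1)
      have h' := h10 h
      have hE := E_of hb h'
      have hstep : (d * b) ^ k0 = (d * b) ^ (k0 + 1) := by
        calc (d * b) ^ k0 = b * (d * b) ^ (k0 + 1) := h'
          _ = (d * b) ^ (k0 + 1) := bpow hE (by omega)
      have hall : (d * b) ^ k1 = (d * b) ^ k0 := per1_all hstep.symm hle
      calc (d * b) ^ k0 = (b * d) ^ (k0 + 1) := h
        _ = d * ((d * b) ^ (k0 + 1) * d) := ypow hd _
        _ = d * ((d * b) ^ k0 * d) := by rw [← hstep]
        _ = d * ((d * b) ^ k1 * d) := by rw [hall]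
        _ = (b * d) ^ k1 := (ypow hd _).symm
    · -- even forward : h : x^k0 = y^k1
      have h' := h10 h
      have hper := per2E hd (E_of hb h')
      have hx : (d * b) ^ k1 = (d * b) ^ k0 := per2_even hper hle he
      calc (d * b) ^ k0 = (b * d) ^ k1 := h
        _ = d * ((d * b) ^ k1 * d) := ypow hd _
        _ = d * ((d * b) ^ k0 * d) := by rw [hx]
        _ = (b * d) ^ k0 := (ypow hd _).symm
    · -- even backward : h : x^k0 = y^k0
      have h' := h10 h
      have hper := per2E hd (E_of hb h')
      have hx : (d * b) ^ k1 = (d * b) ^ k0 := per2_even hper hle he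
      calc (d * b) ^ k0 = (b * d) ^ k0 := h
        _ = d * ((d * b) ^ k0 * d) := ypow hd _
        _ = d * ((d * b) ^ k1 * d) := by rw [hx]
        _ = (b * d) ^ k1 := (ypow hd _).symm
end

section
/- Let M be a monoid and d, b ∈ M with d·d = 1 and b·b = b, and let k0, k1, ℓ0, ℓ1 > 0. Then the conjunction of (d·b)^(k0) = (d·b)^(k0+ℓ0) and (d·b)^(k1) = (d·b)^(k1+ℓ1) holds if and only if (d·b)^m = (d·b)^(m+g), where m = min(k0, k1) and g = gcd(ℓ0, ℓ1). -/
private lemma iterPer {M : Type*} [Monoid M] (x : M) (N l : ℕ)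
    (h : ∀ n, N ≤ n → x ^ n = x ^ (n + l)) :
    ∀ n, N ≤ n → ∀ t, x ^ n = x ^ (n + t * l) := by
  intro n hn t
  induction t with
  | zero => simp
  | succ t ih =>
    rw [ih, h (n + t * l) (le_trans hn (Nat.le_add_right _ _))]
    congr 1
    ring

private lemma gcdPer {M : Type*} [Monoid M] (x : M) (N : ℕ) : ∀ l0 l1 : ℕ,
    (∀ n, N ≤ n → x ^ n = x ^ (n + l0)) →
    (∀ n, N ≤ n → x ^ n = x ^ (n + l1)) →
    ∀ n, N ≤ n → x ^ n = x ^ (n + Nat.gcd l0 l1) := by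
  intro l0 l1
  induction l0, l1 using Nat.gcd.induction with
  | H0 l1 => intro _ h1; simpa using h1
  | H1 l0 l1 hl0 ih =>
    intro h0 h1
    rw [Nat.gcd_rec]
    apply ih
    · intro n hn
      have e1 : x ^ n = x ^ (n + l1) := h1 n hn
      have e2 : x ^ (n + l1 % l0) = x ^ (n + l1 % l0 + (l1 / l0) * l0) :=
        iterPer x N l0 h0 (n + l1 % l0) (le_trans hn (Nat.le_add_right _ _)) _
      have : n + l1 % l0 + (l1 / l0) * l0 = n + l1 := by
        have := Nat.mod_add_div' l1 l0
        omega
      rw [e1, ← this, ← e2]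
    · exact h0

private lemma perFrom {M : Type*} [Monoid M] (x : M) (k l : ℕ)
    (h : x ^ k = x ^ (k + l)) : ∀ n, k ≤ n → x ^ n = x ^ (n + l) := by
  intro n hn
  obtain ⟨c, rfl⟩ := Nat.exists_eq_add_of_le hn
  calc x ^ (k + c) = x ^ k * x ^ c := pow_add x k c
    _ = x ^ (k + l) * x ^ c := by rw [h]
    _ = x ^ (k + l + c) := (pow_add x (k + l) c).symm
    _ = x ^ (k + c + l) := by congr 1; ring

theorem stmt_6 {M : Type*} [Monoid M] (d b : M) (hd : d * d = 1) (hb : b * b = b)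
    (k0 k1 l0 l1 : ℕ) (hk0 : 0 < k0) (hk1 : 0 < k1) (hl0 : 0 < l0) (hl1 : 0 < l1) :
    ((d * b) ^ k0 = (d * b) ^ (k0 + l0) ∧ (d * b) ^ k1 = (d * b) ^ (k1 + l1)) ↔
      (d * b) ^ min k0 k1 = (d * b) ^ (min k0 k1 + Nat.gcd l0 l1) := by
  set x := d * b with hx
  set g := Nat.gcd l0 l1 with hg
  constructor
  · rintro ⟨h0, h1⟩
    set N := max k0 k1 with hN
    have p0 : ∀ n, N ≤ n → x ^ n = x ^ (n + l0) :=
      fun n hn => perFrom x k0 l0 h0 n (le_trans (le_max_left _ _) hn)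
    have p1 : ∀ n, N ≤ n → x ^ n = x ^ (n + l1) :=
      fun n hn => perFrom x k1 l1 h1 n (le_trans (le_max_right _ _) hn)
    have pg : ∀ n, N ≤ n → x ^ n = x ^ (n + g) := gcdPer x N l0 l1 p0 p1
    rcases le_total k0 k1 with hle | hle
    · rw [min_eq_left hle]
      -- jump up by k1 * l0, apply g-period, come back
      have hup : x ^ k0 = x ^ (k0 + k1 * l0) :=
        iterPer x k0 l0 (perFrom x k0 l0 h0) k0 le_rfl k1
      have hbig : N ≤ k0 + k1 * l0 := by
        have : k1 ≤ k1 * l0 := Nat.le_mul_of_pos_right _ hl0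
        omega
      have hmid : x ^ (k0 + k1 * l0) = x ^ (k0 + k1 * l0 + g) := pg _ hbig
      have hdown : x ^ (k0 + g) = x ^ (k0 + g + k1 * l0) :=
        iterPer x k0 l0 (perFrom x k0 l0 h0) (k0 + g) (Nat.le_add_right _ _) k1
      rw [hup, hmid, hdown]
      congr 1
      ring
    · rw [min_eq_right hle]
      have hup : x ^ k1 = x ^ (k1 + k0 * l1) :=
        iterPer x k1 l1 (perFrom x k1 l1 h1) k1 le_rfl k0
      have hbig : N ≤ k1 + k0 * l1 := by
        have : k0 ≤ k0 * l1 := Nat.le_mul_of_pos_right _ hl1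
        omega
      have hmid : x ^ (k1 + k0 * l1) = x ^ (k1 + k0 * l1 + g) := pg _ hbig
      have hdown : x ^ (k1 + g) = x ^ (k1 + g + k0 * l1) :=
        iterPer x k1 l1 (perFrom x k1 l1 h1) (k1 + g) (Nat.le_add_right _ _) k0
      rw [hup, hmid, hdown]
      congr 1
      ring
  · intro h
    set m := min k0 k1 with hm
    have pit : ∀ n, m ≤ n → ∀ t, x ^ n = x ^ (n + t * g) :=
      iterPer x m g (perFrom x m g h)
    constructor
    · have h0 := pit k0 (min_le_left _ _) (l0 / g)
      rwa [Nat.div_mul_cancel (Nat.gcd_dvd_left l0 l1)] at h0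
    · have h1 := pit k1 (min_le_right _ _) (l1 / g)
      rwa [Nat.div_mul_cancel (Nat.gcd_dvd_right l0 l1)] at h1
end

section
/- Let M be a monoid and d, b ∈ M with d·d = 1 and b·b = b, and let k0, k1 > 0. For each of the six equation families eq01°, eq01•, eq10°, eq10•, eq11°, eq11•, the conjunction of the equation with parameter k0 and the equation with parameter k1 holds if and only if the equation with parameter min(k0, k1) holds. Explicitly, for example for eq01°: ((d·b)^(k0) = (d·b)^(k0+1)·d and (d·b)^(k1) = (d·b)^(k1+1)·d) if and only if (d·b)^m = (d·b)^(m+1)·d with m = min(k0, k1), and analogously for the other five families. -/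
section Aux

variable {M : Type*} [Monoid M] {d b : M}

private lemma sj (d b : M) (k : ℕ) : d * (b * d) ^ k = (d * b) ^ k * d :=
  SemiconjBy.pow_right (show SemiconjBy d (b * d) (d * b) from (mul_assoc d b d).symm) k

private lemma sj' (d b : M) (k : ℕ) : b * (d * b) ^ k = (b * d) ^ k * b :=
  SemiconjBy.pow_right (show SemiconjBy b (d * b) (b * d) from (mul_assoc b d b).symm) k

private lemma absorb (hb : b * b = b) : ∀ k, 1 ≤ k → b * (b * d) ^ k = (b * d) ^ k := by
  rintro (_ | j) hk
  · omega
  · rw [pow_succ', ← mul_assoc, ← mul_assoc, hb]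

private lemma upA {P : ℕ → Prop} (hstep : ∀ k, 1 ≤ k → P k → P (k + 1)) {m n : ℕ}
    (h1 : 1 ≤ m) (hmn : m ≤ n) (hm : P m) : P n := by
  induction n, hmn using Nat.le_induction with
  | base => exact hm
  | succ n hn ih => exact hstep n (h1.trans hn) ih

private lemma conj_iff_min {P : ℕ → Prop} (hstep : ∀ k, 1 ≤ k → P k → P (k + 1))
    {k0 k1 : ℕ} (hk0 : 0 < k0) (hk1 : 0 < k1) :
    (P k0 ∧ P k1) ↔ P (min k0 k1) := by
  constructor
  · rintro ⟨h0, h1⟩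
    rcases min_choice k0 k1 with h | h <;> rw [h] <;> assumption
  · intro h
    have hm : 1 ≤ min k0 k1 := le_min hk0 hk1
    exact ⟨upA hstep hm (min_le_left _ _) h, upA hstep hm (min_le_right _ _) h⟩

private lemma step01o (k : ℕ) (h : (d * b) ^ k = (d * b) ^ (k + 1) * d) :
    (d * b) ^ (k + 1) = (d * b) ^ (k + 1 + 1) * d := by
  calc (d * b) ^ (k + 1) = (d * b) * (d * b) ^ k := pow_succ' _ _
    _ = (d * b) * ((d * b) ^ (k + 1) * d) := by rw [h]
    _ = (d * b) ^ (k + 1 + 1) * d := by rw [← mul_assoc, ← pow_succ']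

private lemma step01b (k : ℕ) (h : (d * b) ^ k = (d * b) ^ k * d) :
    (d * b) ^ (k + 1) = (d * b) ^ (k + 1) * d := by
  calc (d * b) ^ (k + 1) = (d * b) * (d * b) ^ k := pow_succ' _ _
    _ = (d * b) * ((d * b) ^ k * d) := by rw [← h, h]
    _ = (d * b) ^ (k + 1) * d := by rw [← mul_assoc, ← pow_succ']

private lemma step10o (k : ℕ) (h : (d * b) ^ k = (b * d) ^ k * b) :
    (d * b) ^ (k + 1) = (b * d) ^ (k + 1) * b := by
  calc (d * b) ^ (k + 1) = (d * b) ^ k * (d * b) := pow_succ _ _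
    _ = ((b * d) ^ k * b) * (d * b) := by rw [h]
    _ = (b * d) ^ (k + 1) * b := by rw [pow_succ]; simp [mul_assoc]

private lemma step10b (j : ℕ) (h : (d * b) ^ (j + 1) = (b * d) ^ j * b) :
    (d * b) ^ (j + 1 + 1) = (b * d) ^ (j + 1) * b := by
  calc (d * b) ^ (j + 1 + 1) = (d * b) ^ (j + 1) * (d * b) := pow_succ _ _
    _ = ((b * d) ^ j * b) * (d * b) := by rw [h]
    _ = (b * d) ^ (j + 1) * b := by rw [pow_succ]; simp [mul_assoc]

private lemma step11o (hb : b * b = b) (k : ℕ) (hk : 1 ≤ k)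
    (h : (d * b) ^ k = (b * d) ^ k) :
    (d * b) ^ (k + 1) = (b * d) ^ (k + 1) := by
  have habs : b * (d * b) ^ k = (d * b) ^ k := by
    rw [h]; exact absorb hb k hk
  calc (d * b) ^ (k + 1) = (d * b) * (d * b) ^ k := pow_succ' _ _
    _ = d * (b * (d * b) ^ k) := by rw [mul_assoc]
    _ = d * (d * b) ^ k := by rw [habs]
    _ = d * (b * d) ^ k := by rw [h]
    _ = (d * b) ^ k * d := sj d b k
    _ = (b * (d * b) ^ k) * d := by rw [habs]
    _ = ((b * d) ^ k * b) * d := by rw [sj']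
    _ = (b * d) ^ k * (b * d) := mul_assoc _ _ _
    _ = (b * d) ^ (k + 1) := (pow_succ _ _).symm

private lemma step11b (hd : d * d = 1) (hb : b * b = b) (j : ℕ)
    (h : (d * b) ^ (j + 1) = (b * d) ^ (j + 1 + 1)) :
    (d * b) ^ (j + 1 + 1) = (b * d) ^ (j + 1 + 1 + 1) := by
  set k := j + 1 with hkdef
  have habs : b * (d * b) ^ k = (d * b) ^ k := by
    rw [h]; exact absorb hb (k + 1) (by omega)
  have e0 : (d * b) ^ (k + 1) = d * (d * b) ^ k := by
    rw [pow_succ', mul_assoc, habs]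
  have e01 : (d * b) ^ (k + 1) = (d * b) ^ (k + 1) * d := by
    calc (d * b) ^ (k + 1) = d * (d * b) ^ k := e0
      _ = d * (b * d) ^ (k + 1) := by rw [h]
      _ = (d * b) ^ (k + 1) * d := sj d b (k + 1)
  have e1 : (d * b) ^ (k + 1) = b * (d * b) ^ j := by
    rw [e0, hkdef, pow_succ', ← mul_assoc, ← mul_assoc, hd, one_mul]
  have habs2 : b * (d * b) ^ (k + 1) = (d * b) ^ (k + 1) := by
    rw [e1, ← mul_assoc, hb]
  calc (d * b) ^ (k + 1) = (d * b) ^ (k + 1) * d := e01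
    _ = (b * (d * b) ^ (k + 1)) * d := by rw [habs2]
    _ = b * (d * (b * d) ^ (k + 1)) := by rw [mul_assoc, ← sj]
    _ = (b * d) ^ (k + 1 + 1) :=
      ((pow_succ' (b * d) (k + 1)).trans (mul_assoc b d _)).symm

end Aux

theorem stmt_7 {M : Type*} [Monoid M] (d b : M) (hd : d * d = 1) (hb : b * b = b)
    (k0 k1 : ℕ) (hk0 : 0 < k0) (hk1 : 0 < k1) :
    -- eq01°
    (((d * b) ^ k0 = (d * b) ^ (k0 + 1) * d ∧ (d * b) ^ k1 = (d * b) ^ (k1 + 1) * d) ↔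
      (d * b) ^ min k0 k1 = (d * b) ^ (min k0 k1 + 1) * d) ∧
    -- eq01•
    (((d * b) ^ k0 = (d * b) ^ k0 * d ∧ (d * b) ^ k1 = (d * b) ^ k1 * d) ↔
      (d * b) ^ min k0 k1 = (d * b) ^ min k0 k1 * d) ∧
    -- eq10°
    (((d * b) ^ k0 = (b * d) ^ k0 * b ∧ (d * b) ^ k1 = (b * d) ^ k1 * b) ↔
      (d * b) ^ min k0 k1 = (b * d) ^ min k0 k1 * b) ∧
    -- eq10•
    (((d * b) ^ k0 = (b * d) ^ (k0 - 1) * b ∧ (d * b) ^ k1 = (b * d) ^ (k1 - 1) * b) ↔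
      (d * b) ^ min k0 k1 = (b * d) ^ (min k0 k1 - 1) * b) ∧
    -- eq11°
    (((d * b) ^ k0 = (b * d) ^ k0 ∧ (d * b) ^ k1 = (b * d) ^ k1) ↔
      (d * b) ^ min k0 k1 = (b * d) ^ min k0 k1) ∧
    -- eq11•
    (((d * b) ^ k0 = (b * d) ^ (k0 + 1) ∧ (d * b) ^ k1 = (b * d) ^ (k1 + 1)) ↔
      (d * b) ^ min k0 k1 = (b * d) ^ (min k0 k1 + 1)) := by
  refine ⟨conj_iff_min (fun k _ h => step01o k h) hk0 hk1,
          conj_iff_min (fun k _ h => step01b k h) hk0 hk1,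
          conj_iff_min (fun k _ h => step10o k h) hk0 hk1,
          conj_iff_min (P := fun k => (d * b) ^ k = (b * d) ^ (k - 1) * b) ?_ hk0 hk1,
          conj_iff_min (fun k hk h => step11o hb k hk h) hk0 hk1,
          conj_iff_min (P := fun k => (d * b) ^ k = (b * d) ^ (k + 1)) ?_ hk0 hk1⟩
  · rintro (_ | j) hk h
    · omega
    · simpa using step10b j (by simpa using h)
  · rintro (_ | j) hk h
    · omega
    · exact step11b hd hb j h
end

section
/- Let M be a monoid and d, b ∈ M with d·d = 1 and b·b = b, and let k0, k1 > 0. Then ((d·b)^(k0) = (d·b)^(k0+1)·d and (d·b)^(k1) = (b·d)^(k1)·b) holds if and only if (d·b)^m = (b·d)^m, where m = min(k0, k1). -/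
section stmt8aux
variable {M : Type*} [Monoid M]

private lemma s8_lxd (d b : M) : ∀ k : ℕ, (d*b)^k * d = d * (b*d)^k := by
  intro k
  induction k with
  | zero => simp
  | succ n ih =>
    calc (d*b)^(n+1) * d = ((d*b)^n * d) * (b*d) := by
          rw [pow_succ]; simp only [mul_assoc]
      _ = (d * (b*d)^n) * (b*d) := by rw [ih]
      _ = d * (b*d)^(n+1) := by rw [pow_succ, mul_assoc]

private lemma s8_lyb (d b : M) (hb : b * b = b) : ∀ k : ℕ, (b*d)^k * b = b * (d*b)^k := by
  intro k
  induction k with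
  | zero => simp
  | succ n ih =>
    calc (b*d)^(n+1) * b = (b*d) * ((b*d)^n * b) := by
          rw [pow_succ']; simp only [mul_assoc]
      _ = (b*d) * (b * (d*b)^n) := by rw [ih]
      _ = b * ((d * (b * (d*b)^n))) := by simp only [mul_assoc]
      _ = b * (d*b)^(n+1) := by rw [pow_succ']; simp only [mul_assoc, hb]

private lemma s8_lconj (d b : M) (hd : d * d = 1) (k : ℕ) :
    (b*d)^k = d * ((d*b)^k * d) := by
  rw [s8_lxd, ← mul_assoc, hd, one_mul]

private lemma s8_lyx (d b : M) (hd : d * d = 1) (hb : b * b = b) :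
    (b*d) * (d*b) = b := by
  calc (b*d) * (d*b) = b * ((d*d)*b) := by simp only [mul_assoc]
    _ = b := by rw [hd, one_mul, hb]

/-- upward propagation of eq01 from a base exponent -/
private lemma s8_up01 (d b : M) (m : ℕ) (h01 : (d*b)^m = (d*b)^(m+1) * d) :
    ∀ j : ℕ, (d*b)^(m+j) = (d*b)^(m+j+1) * d := by
  intro j
  induction j with
  | zero => simpa using h01
  | succ n ih =>
    show (d*b)^((m+n)+1) = (d*b)^((m+n+1)+1) * d
    calc (d*b)^((m+n)+1) = (d*b)*(d*b)^(m+n) := by rw [← pow_succ']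
      _ = (d*b)*((d*b)^(m+n+1) * d) := by rw [ih]
      _ = ((d*b)*(d*b)^(m+n+1)) * d := by simp only [mul_assoc]
      _ = (d*b)^((m+n+1)+1) * d := by rw [← pow_succ']

/-- backward direction, generalized -/
private lemma s8_back (d b : M) (hd : d * d = 1) (hb : b * b = b)
    (m : ℕ) (hm : 0 < m) (h11 : (d*b)^m = (b*d)^m) :
    ∀ k : ℕ, m ≤ k → ((d*b)^k = (d*b)^(k+1) * d ∧ (d*b)^k = (b*d)^k * b) := by
  have bym : b * (b*d)^m = (b*d)^m := by
    obtain ⟨n, rfl⟩ := Nat.exists_eq_succ_of_ne_zero hm.ne'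
    calc b * (b*d)^(n+1) = b * ((b*d) * (b*d)^n) := by rw [pow_succ']
      _ = ((b*b)*d) * (b*d)^n := by simp only [mul_assoc]
      _ = (b*d) * (b*d)^n := by rw [hb]
      _ = (b*d)^(n+1) := by rw [← pow_succ']
  have bxm : b * (d*b)^m = (d*b)^m := by rw [h11]; exact bym
  have bx' : ∀ j : ℕ, b * (d*b)^(m+j) = (d*b)^(m+j) := by
    intro j; rw [pow_add, ← mul_assoc, bxm]
  have ymb : (b*d)^m * b = (b*d)^m := by
    rw [s8_lyb d b hb, bxm, h11]
  have h01m : (d*b)^m = (d*b)^(m+1) * d := by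
    calc (d*b)^m = ((d*b)^m * d) * d := by rw [mul_assoc, hd, mul_one]
      _ = (d * (b*d)^m) * d := by rw [s8_lxd]
      _ = (d * ((b*d)^m * b)) * d := by rw [ymb]
      _ = ((d * (b*d)^m) * b) * d := by simp only [mul_assoc]
      _ = (((d*b)^m * d) * b) * d := by rw [s8_lxd]
      _ = ((d*b)^m * (d*b)) * d := by simp only [mul_assoc]
      _ = (d*b)^(m+1) * d := by rw [pow_succ]
  intro k hk
  obtain ⟨j, rfl⟩ := Nat.le.dest hk
  constructor
  · exact s8_up01 d b m h01m j
  · rw [s8_lyb d b hb, bx' j]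

end stmt8aux

theorem stmt_8 {M : Type*} [Monoid M] (d b : M) (hd : d * d = 1) (hb : b * b = b)
    (k0 k1 : ℕ) (hk0 : 0 < k0) (hk1 : 0 < k1) :
    ((d * b) ^ k0 = (d * b) ^ (k0 + 1) * d ∧ (d * b) ^ k1 = (b * d) ^ k1 * b) ↔
      (d * b) ^ min k0 k1 = (b * d) ^ min k0 k1 := by
  constructor
  · rintro ⟨h01, h10⟩
    have up01 := s8_up01 d b k0 h01
    -- collapse by 2
    have col : ∀ j : ℕ, (d*b)^(k0+j) = (d*b)^(k0+j+2) := by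
      intro j
      calc (d*b)^(k0+j) = (d*b)^(k0+j+1) * d := up01 j
        _ = ((d*b)^(k0+j+1+1) * d) * d := by
            rw [show (d*b)^(k0+j+1) = (d*b)^(k0+j+1+1) * d from up01 (j+1)]
        _ = (d*b)^(k0+j+2) := by rw [mul_assoc, hd, mul_one]
    have col2 : ∀ t j : ℕ, (d*b)^(k0+j) = (d*b)^(k0+j+2*t) := by
      intro t
      induction t with
      | zero => intro j; rfl
      | succ n ih =>
        intro j
        calc (d*b)^(k0+j) = (d*b)^(k0+(j+2)) := by
              rw [col j, show k0+j+2 = k0+(j+2) from by ring]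
          _ = (d*b)^(k0+(j+2)+2*n) := ih (j+2)
          _ = (d*b)^(k0+j+2*(n+1)) := by
              rw [show k0+(j+2)+2*n = k0+j+2*(n+1) from by ring]
    -- left b-absorption from eq10
    have bx : b * (d*b)^k1 = (d*b)^k1 := by
      rw [h10, s8_lyb d b hb, ← mul_assoc, hb]
    have bx' : ∀ j : ℕ, b * (d*b)^(k1+j) = (d*b)^(k1+j) := by
      intro j
      rw [pow_add, ← mul_assoc, bx]
    -- high-power equality of x^k and y^k
    have hy : ∀ k : ℕ, k0 ≤ k → k1 ≤ k → (b*d)^k = (d*b)^k := by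
      intro k hle0 hle1
      obtain ⟨j1, h1⟩ := Nat.le.dest hle1
      obtain ⟨j0, rfl⟩ := Nat.le.dest hle0
      calc (b*d)^(k0+j0) = d * ((d*b)^(k0+j0) * d) := s8_lconj d b hd _
        _ = d * (((d*b)^(k0+j0+1) * d) * d) := by rw [← up01 j0]
        _ = d * (d*b)^(k0+j0+1) := by rw [mul_assoc, hd, mul_one]
        _ = d * ((d*b)*(d*b)^(k0+j0)) := by rw [← pow_succ']
        _ = ((d*d)*b) * (d*b)^(k0+j0) := by simp only [mul_assoc]
        _ = b * (d*b)^(k0+j0) := by rw [hd, one_mul]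
        _ = (d*b)^(k0+j0) := by rw [← h1, bx' j1]
    rcases le_total k0 k1 with hle | hle
    · rw [min_eq_left hle]
      have hbx0 : b * (d*b)^k0 = (d*b)^k0 := by
        have e1 : (d*b)^k0 = (d*b)^(k0+2*k1) := by simpa using col2 k1 0
        rw [e1, show k0 + 2*k1 = k1 + (k1 + k0) from by ring]
        exact bx' _
      have u0 : (d*b)^k0 = (d*b)^(k0+1) * d := h01
      calc (d*b)^k0 = b * (d*b)^k0 := hbx0.symm
        _ = ((d*d)*b) * (d*b)^k0 := by rw [hd, one_mul]
        _ = d * ((d*b)*(d*b)^k0) := by simp only [mul_assoc]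
        _ = d * (d*b)^(k0+1) := by rw [← pow_succ']
        _ = d * ((d*b)^(k0+1) * (d*d)) := by rw [hd, mul_one]
        _ = d * (((d*b)^(k0+1) * d) * d) := by simp only [mul_assoc]
        _ = d * ((d*b)^k0 * d) := by rw [← u0]
        _ = (b*d)^k0 := (s8_lconj d b hd k0).symm
    · rw [min_eq_right hle]
      have step : ∀ j : ℕ, (d*b)^(k1+j) = (b*d) * (d*b)^(k1+j+1) := by
        intro j
        calc (d*b)^(k1+j) = b * (d*b)^(k1+j) := (bx' j).symm
          _ = ((b*d)*(d*b)) * (d*b)^(k1+j) := by rw [s8_lyx d b hd hb]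
          _ = (b*d) * ((d*b)*(d*b)^(k1+j)) := by rw [mul_assoc]
          _ = (b*d) * (d*b)^(k1+j+1) := by rw [← pow_succ']
      have iter : ∀ t : ℕ, (d*b)^k1 = (b*d)^t * (d*b)^(k1+t) := by
        intro t
        induction t with
        | zero => simp
        | succ n ih =>
          show (d*b)^k1 = (b*d)^(n+1) * (d*b)^((k1+n)+1)
          calc (d*b)^k1 = (b*d)^n * (d*b)^(k1+n) := ih
            _ = (b*d)^n * ((b*d) * (d*b)^(k1+n+1)) := by rw [step n]
            _ = ((b*d)^n * (b*d)) * (d*b)^(k1+n+1) := by simp only [mul_assoc]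
            _ = (b*d)^(n+1) * (d*b)^((k1+n)+1) := by rw [← pow_succ]
      have key : (d*b)^k1 = (d*b)^(k1+2*k0) := by
        calc (d*b)^k1 = (b*d)^k0 * (d*b)^(k1+k0) := iter k0
          _ = (b*d)^k0 * (b*d)^(k1+k0) := by
              rw [hy (k1+k0) (Nat.le_add_left _ _) (Nat.le_add_right _ _)]
          _ = (b*d)^(k1+2*k0) := by
              rw [← pow_add, show k0+(k1+k0) = k1+2*k0 from by ring]
          _ = (d*b)^(k1+2*k0) := hy _ (by omega) (by omega)
      calc (d*b)^k1 = (d*b)^(k1+2*k0) := key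
        _ = (b*d)^(k1+2*k0) := (hy _ (by omega) (by omega)).symm
        _ = d * ((d*b)^(k1+2*k0) * d) := s8_lconj d b hd _
        _ = d * ((d*b)^k1 * d) := by rw [← key]
        _ = (b*d)^k1 := (s8_lconj d b hd k1).symm
  · intro h11
    have hm0 : 0 < min k0 k1 := lt_min hk0 hk1
    haveI := s8_back d b hd hb (min k0 k1) hm0 h11
    exact ⟨(this k0 (min_le_left _ _)).1, (this k1 (min_le_right _ _)).2⟩
end

section
/- Let M be a monoid and d, b ∈ M with d·d = 1 and b·b = b, and let k0, k1, r > 0. Then: (1) for each i ∈ {01, 10, 11}, the conjunction of (d·b)^(k0) = (d·b)^(k0+2r) and eqᵢ°(k1) holds if and only if eqᵢ°(min(k0, k1)) holds; (2) for all distinct i, j ∈ {01, 10, 11}, the conjunction eqᵢ°(k0) ∧ eqⱼ°(k1) holds if and only if eq11°(min(k0, k1)) holds (the bitwise disjunction of two distinct indices among 01, 10, 11 being 11). -/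
namespace Stmt9

variable {M : Type*} [Monoid M]

private lemma periodic (x : M) {k p : ℕ} (h : x ^ (k + p) = x ^ k) :
    ∀ t, x ^ (k + p * t) = x ^ k := by
  intro t
  induction t with
  | zero => simp
  | succ t ih =>
      have e : k + p * (t + 1) = (k + p * t) + p := by ring
      rw [e, pow_add, ih, ← pow_add, h]

private lemma stab (x : M) {k : ℕ} (h : x ^ (k + 2) = x ^ k) :
    ∀ m, k ≤ m → ∀ t, x ^ (m + 2 * t) = x ^ m := by
  intro m hm t
  obtain ⟨s, rfl⟩ := Nat.exists_eq_add_of_le hm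
  have h1 : x ^ (k + 2 * t) = x ^ k := periodic x h t
  have e : k + s + 2 * t = (k + 2 * t) + s := by ring
  rw [e, pow_add, h1, ← pow_add]

private lemma part1_gen (x : M) (P : ℕ → Prop)
    (hmono : ∀ k m : ℕ, 0 < k → k ≤ m → P k → P m)
    (heq2 : ∀ k : ℕ, 0 < k → P k → x ^ (k + 2) = x ^ k)
    (htrans : ∀ k m : ℕ, x ^ k = x ^ m → x ^ (k + 1) = x ^ (m + 1) → P m → P k)
    {k0 k1 r : ℕ} (hk0 : 0 < k0) (hk1 : 0 < k1) (hr : 0 < r) :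
    (x ^ k0 = x ^ (k0 + 2 * r) ∧ P k1) ↔ P (min k0 k1) := by
  constructor
  · rintro ⟨h0, h1⟩
    rcases le_total k0 k1 with h | h
    · rw [min_eq_left h]
      have hper := periodic x h0.symm
      have hm1 : k1 ≤ k0 + 2 * r * k1 := by nlinarith
      have hPm : P (k0 + 2 * r * k1) := hmono _ _ hk1 hm1 h1
      have he : x ^ k0 = x ^ (k0 + 2 * r * k1) := (hper k1).symm
      have he1 : x ^ (k0 + 1) = x ^ ((k0 + 2 * r * k1) + 1) := by
        rw [pow_succ, pow_succ, he]
      exact htrans _ _ he he1 hPm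
    · rwa [min_eq_right h]
  · intro h
    have hmin : 0 < min k0 k1 := lt_min hk0 hk1
    refine ⟨?_, hmono _ _ hmin (min_le_right _ _) h⟩
    exact (stab x (heq2 _ hmin h) k0 (min_le_left _ _) r).symm

private lemma part2_gen (x : M) (P Q C : ℕ → Prop)
    (hmonoP : ∀ k m : ℕ, 0 < k → k ≤ m → P k → P m)
    (hmonoQ : ∀ k m : ℕ, 0 < k → k ≤ m → Q k → Q m)
    (heq2P : ∀ k : ℕ, 0 < k → P k → x ^ (k + 2) = x ^ k)
    (heq2Q : ∀ k : ℕ, 0 < k → Q k → x ^ (k + 2) = x ^ k)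
    (hPQC : ∀ m : ℕ, 0 < m → P m → Q m → C m)
    (hCP : ∀ k : ℕ, 0 < k → C k → P k)
    (hCQ : ∀ k : ℕ, 0 < k → C k → Q k)
    (htransC : ∀ k m : ℕ, x ^ k = x ^ m → x ^ (k + 1) = x ^ (m + 1) → C m → C k)
    {k0 k1 : ℕ} (hk0 : 0 < k0) (hk1 : 0 < k1) :
    (P k0 ∧ Q k1) ↔ C (min k0 k1) := by
  have hminle0 := min_le_left k0 k1
  have hminle1 := min_le_right k0 k1
  have hmaxge0 := le_max_left k0 k1
  have hmaxge1 := le_max_right k0 k1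
  constructor
  · rintro ⟨h0, h1⟩
    have hm0 : k0 ≤ min k0 k1 + 2 * max k0 k1 := by omega
    have hm1 : k1 ≤ min k0 k1 + 2 * max k0 k1 := by omega
    have hPm := hmonoP _ _ hk0 hm0 h0
    have hQm := hmonoQ _ _ hk1 hm1 h1
    have hCm : C (min k0 k1 + 2 * max k0 k1) := hPQC _ (by omega) hPm hQm
    have h2 : x ^ (min k0 k1 + 2) = x ^ min k0 k1 := by
      rcases le_total k0 k1 with h | h
      · rw [min_eq_left h]; exact heq2P _ hk0 h0
      · rw [min_eq_right h]; exact heq2Q _ hk1 h1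
    have he : x ^ min k0 k1 = x ^ (min k0 k1 + 2 * max k0 k1) :=
      (periodic x h2 (max k0 k1)).symm
    have he1 : x ^ (min k0 k1 + 1) = x ^ ((min k0 k1 + 2 * max k0 k1) + 1) := by
      rw [pow_succ, pow_succ, he]
    exact htransC _ _ he he1 hCm
  · intro h
    have hmin : 0 < min k0 k1 := lt_min hk0 hk1
    exact ⟨hmonoP _ _ hmin hminle0 (hCP _ hmin h),
           hmonoQ _ _ hmin hminle1 (hCQ _ hmin h)⟩

variable {d b : M}

private lemma xb (hb : b * b = b) {k : ℕ} (hk : 0 < k) :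
    (d * b) ^ k * b = (d * b) ^ k := by
  cases k with
  | zero => omega
  | succ n =>
      rw [pow_succ, mul_assoc, mul_assoc d b b, hb]

-- A k
private lemma eq2A (hd : d * d = 1) (hb : b * b = b) (k : ℕ) (hk : 0 < k)
    (h : (d * b) ^ (k + 1) = (d * b) ^ k * d) :
    (d * b) ^ (k + 2) = (d * b) ^ k := by
  calc (d * b) ^ (k + 2) = (d * b) ^ (k + 1) * (d * b) := by rw [pow_succ]
    _ = ((d * b) ^ k * d) * (d * b) := by rw [h]
    _ = (d * b) ^ k * ((d * d) * b) := by rw [mul_assoc, ← mul_assoc d d b]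
    _ = (d * b) ^ k * b := by rw [hd, one_mul]
    _ = (d * b) ^ k := xb hb hk

private lemma eq2B (hd : d * d = 1) (k : ℕ)
    (h : (d * b) ^ (k + 1) = d * (d * b) ^ k) :
    (d * b) ^ (k + 2) = (d * b) ^ k := by
  calc (d * b) ^ (k + 2) = (d * b) ^ (k + 1) * (d * b) := by rw [pow_succ]
    _ = (d * (d * b) ^ k) * (d * b) := by rw [h]
    _ = d * (d * b) ^ (k + 1) := by rw [mul_assoc, ← pow_succ]
    _ = d * (d * (d * b) ^ k) := by rw [h]
    _ = (d * b) ^ k := by rw [← mul_assoc, hd, one_mul]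

private lemma CtoB (hd : d * d = 1) (hb : b * b = b) (k : ℕ) (hk : 0 < k)
    (h : (d * b) ^ k * d = d * (d * b) ^ k) :
    (d * b) ^ (k + 1) = d * (d * b) ^ k := by
  calc (d * b) ^ (k + 1) = (d * b) ^ k * (d * b) := by rw [pow_succ]
    _ = ((d * b) ^ k * d) * b := by rw [mul_assoc]
    _ = (d * (d * b) ^ k) * b := by rw [h]
    _ = d * ((d * b) ^ k * b) := by rw [mul_assoc]
    _ = d * (d * b) ^ k := by rw [xb hb hk]

private lemma CtoA (hd : d * d = 1) (hb : b * b = b) (k : ℕ) (hk : 0 < k)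
    (h : (d * b) ^ k * d = d * (d * b) ^ k) :
    (d * b) ^ (k + 1) = (d * b) ^ k * d :=
  (CtoB hd hb k hk h).trans h.symm

private lemma eq2C (hd : d * d = 1) (hb : b * b = b) (k : ℕ) (hk : 0 < k)
    (h : (d * b) ^ k * d = d * (d * b) ^ k) :
    (d * b) ^ (k + 2) = (d * b) ^ k :=
  eq2B hd k (CtoB hd hb k hk h)

private lemma ABtoC (k : ℕ)
    (hA : (d * b) ^ (k + 1) = (d * b) ^ k * d)
    (hB : (d * b) ^ (k + 1) = d * (d * b) ^ k) :
    (d * b) ^ k * d = d * (d * b) ^ k :=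
  hA.symm.trans hB

private lemma stepA (hd : d * d = 1) (hb : b * b = b) (k : ℕ) (hk : 0 < k)
    (h : (d * b) ^ (k + 1) = (d * b) ^ k * d) :
    (d * b) ^ (k + 2) = (d * b) ^ (k + 1) * d := by
  calc (d * b) ^ (k + 2) = (d * b) ^ k := eq2A hd hb k hk h
    _ = (d * b) ^ k * (d * d) := by rw [hd, mul_one]
    _ = ((d * b) ^ k * d) * d := by rw [mul_assoc]
    _ = (d * b) ^ (k + 1) * d := by rw [← h]

private lemma stepB (hd : d * d = 1) (k : ℕ)
    (h : (d * b) ^ (k + 1) = d * (d * b) ^ k) :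
    (d * b) ^ (k + 2) = d * (d * b) ^ (k + 1) := by
  calc (d * b) ^ (k + 2) = (d * b) ^ k := eq2B hd k h
    _ = (d * d) * (d * b) ^ k := by rw [hd, one_mul]
    _ = d * (d * (d * b) ^ k) := by rw [mul_assoc]
    _ = d * (d * b) ^ (k + 1) := by rw [← h]

private lemma stepC (hd : d * d = 1) (hb : b * b = b) (k : ℕ) (hk : 0 < k)
    (h : (d * b) ^ k * d = d * (d * b) ^ k) :
    (d * b) ^ (k + 1) * d = d * (d * b) ^ (k + 1) := by
  have hB := CtoB hd hb k hk h
  calc (d * b) ^ (k + 1) * d = (d * (d * b) ^ k) * d := by rw [hB]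
    _ = d * ((d * b) ^ k * d) := by rw [mul_assoc]
    _ = d * (d * (d * b) ^ k) := by rw [h]
    _ = d * (d * b) ^ (k + 1) := by rw [← hB]

private lemma monoA (hd : d * d = 1) (hb : b * b = b) (k m : ℕ) (hk : 0 < k)
    (hkm : k ≤ m) (h : (d * b) ^ (k + 1) = (d * b) ^ k * d) :
    (d * b) ^ (m + 1) = (d * b) ^ m * d := by
  induction m, hkm using Nat.le_induction with
  | base => exact h
  | succ m hm ih => exact stepA hd hb m (lt_of_lt_of_le hk hm) ih

private lemma monoB (hd : d * d = 1) (k m : ℕ) (hk : 0 < k)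
    (hkm : k ≤ m) (h : (d * b) ^ (k + 1) = d * (d * b) ^ k) :
    (d * b) ^ (m + 1) = d * (d * b) ^ m := by
  induction m, hkm using Nat.le_induction with
  | base => exact h
  | succ m hm ih => exact stepB hd m ih

private lemma monoC (hd : d * d = 1) (hb : b * b = b) (k m : ℕ) (hk : 0 < k)
    (hkm : k ≤ m) (h : (d * b) ^ k * d = d * (d * b) ^ k) :
    (d * b) ^ m * d = d * (d * b) ^ m := by
  induction m, hkm using Nat.le_induction with
  | base => exact h
  | succ m hm ih => exact stepC hd hb m (lt_of_lt_of_le hk hm) ih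

private lemma transA (k m : ℕ) (he : (d * b) ^ k = (d * b) ^ m)
    (he1 : (d * b) ^ (k + 1) = (d * b) ^ (m + 1))
    (h : (d * b) ^ (m + 1) = (d * b) ^ m * d) :
    (d * b) ^ (k + 1) = (d * b) ^ k * d := by rw [he1, h, he]

private lemma transB (k m : ℕ) (he : (d * b) ^ k = (d * b) ^ m)
    (he1 : (d * b) ^ (k + 1) = (d * b) ^ (m + 1))
    (h : (d * b) ^ (m + 1) = d * (d * b) ^ m) :
    (d * b) ^ (k + 1) = d * (d * b) ^ k := by rw [he1, h, he]

private lemma transC (k m : ℕ) (he : (d * b) ^ k = (d * b) ^ m)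
    (he1 : (d * b) ^ (k + 1) = (d * b) ^ (m + 1))
    (h : (d * b) ^ m * d = d * (d * b) ^ m) :
    (d * b) ^ k * d = d * (d * b) ^ k := by rw [he]; exact h

private lemma bd_pow (hd : d * d = 1) (k : ℕ) :
    (b * d) ^ k = d * (d * b) ^ k * d := by
  induction k with
  | zero => simp [hd]
  | succ k ih =>
      calc (b * d) ^ (k + 1) = (b * d) ^ k * (b * d) := by rw [pow_succ]
        _ = (d * (d * b) ^ k * d) * (b * d) := by rw [ih]
        _ = d * ((d * b) ^ k * (d * b)) * d := by simp [mul_assoc]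
        _ = d * (d * b) ^ (k + 1) * d := by rw [← pow_succ]

private lemma eq01_iff (hd : d * d = 1) (k : ℕ) :
    (d * b) ^ k = (d * b) ^ (k + 1) * d ↔ (d * b) ^ (k + 1) = (d * b) ^ k * d := by
  constructor
  · intro h; rw [h, mul_assoc, hd, mul_one]
  · intro h; rw [h, mul_assoc, hd, mul_one]

private lemma bd_pow_b (hd : d * d = 1) (k : ℕ) :
    (b * d) ^ k * b = d * (d * b) ^ (k + 1) := by
  rw [bd_pow hd]
  simp [mul_assoc, pow_succ]

private lemma eq10_iff (hd : d * d = 1) (k : ℕ) :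
    (d * b) ^ k = (b * d) ^ k * b ↔ (d * b) ^ (k + 1) = d * (d * b) ^ k := by
  rw [bd_pow_b hd]
  constructor
  · intro h
    rw [h, ← mul_assoc, hd, one_mul]
  · intro h
    rw [h, ← mul_assoc, hd, one_mul]

private lemma eq11_iff (hd : d * d = 1) (k : ℕ) :
    (d * b) ^ k = (b * d) ^ k ↔ (d * b) ^ k * d = d * (d * b) ^ k := by
  rw [bd_pow hd]
  constructor
  · intro h
    nth_rewrite 1 [h]
    rw [mul_assoc, hd, mul_one]
  · intro h
    rw [← h, mul_assoc, hd, mul_one]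

end Stmt9

open Stmt9 in
theorem stmt_9 {M : Type*} [Monoid M] (d b : M) (hd : d * d = 1) (hb : b * b = b)
    (k0 k1 r : ℕ) (hk0 : 0 < k0) (hk1 : 0 < k1) (hr : 0 < r) :
    -- (1) eq00(k0, 2r) ∧ eqᵢ°(k1) ↔ eqᵢ°(min k0 k1), for i ∈ {01, 10, 11}
    (((d * b) ^ k0 = (d * b) ^ (k0 + 2 * r) ∧ (d * b) ^ k1 = (d * b) ^ (k1 + 1) * d) ↔
      (d * b) ^ min k0 k1 = (d * b) ^ (min k0 k1 + 1) * d) ∧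
    (((d * b) ^ k0 = (d * b) ^ (k0 + 2 * r) ∧ (d * b) ^ k1 = (b * d) ^ k1 * b) ↔
      (d * b) ^ min k0 k1 = (b * d) ^ min k0 k1 * b) ∧
    (((d * b) ^ k0 = (d * b) ^ (k0 + 2 * r) ∧ (d * b) ^ k1 = (b * d) ^ k1) ↔
      (d * b) ^ min k0 k1 = (b * d) ^ min k0 k1) ∧
    -- (2) eqᵢ°(k0) ∧ eqⱼ°(k1) ↔ eq11°(min k0 k1), for distinct i, j ∈ {01, 10, 11}
    (((d * b) ^ k0 = (d * b) ^ (k0 + 1) * d ∧ (d * b) ^ k1 = (b * d) ^ k1 * b) ↔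
      (d * b) ^ min k0 k1 = (b * d) ^ min k0 k1) ∧
    (((d * b) ^ k0 = (b * d) ^ k0 * b ∧ (d * b) ^ k1 = (d * b) ^ (k1 + 1) * d) ↔
      (d * b) ^ min k0 k1 = (b * d) ^ min k0 k1) ∧
    (((d * b) ^ k0 = (d * b) ^ (k0 + 1) * d ∧ (d * b) ^ k1 = (b * d) ^ k1) ↔
      (d * b) ^ min k0 k1 = (b * d) ^ min k0 k1) ∧
    (((d * b) ^ k0 = (b * d) ^ k0 ∧ (d * b) ^ k1 = (d * b) ^ (k1 + 1) * d) ↔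
      (d * b) ^ min k0 k1 = (b * d) ^ min k0 k1) ∧
    (((d * b) ^ k0 = (b * d) ^ k0 * b ∧ (d * b) ^ k1 = (b * d) ^ k1) ↔
      (d * b) ^ min k0 k1 = (b * d) ^ min k0 k1) ∧
    (((d * b) ^ k0 = (b * d) ^ k0 ∧ (d * b) ^ k1 = (b * d) ^ k1 * b) ↔
      (d * b) ^ min k0 k1 = (b * d) ^ min k0 k1) := by
  have PA : ∀ k m : ℕ, 0 < k → k ≤ m →
      (d * b) ^ (k + 1) = (d * b) ^ k * d → (d * b) ^ (m + 1) = (d * b) ^ m * d :=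
    fun k m hk hkm h => monoA hd hb k m hk hkm h
  have PB : ∀ k m : ℕ, 0 < k → k ≤ m →
      (d * b) ^ (k + 1) = d * (d * b) ^ k → (d * b) ^ (m + 1) = d * (d * b) ^ m :=
    fun k m hk hkm h => monoB hd k m hk hkm h
  have PC : ∀ k m : ℕ, 0 < k → k ≤ m →
      (d * b) ^ k * d = d * (d * b) ^ k → (d * b) ^ m * d = d * (d * b) ^ m :=
    fun k m hk hkm h => monoC hd hb k m hk hkm h
  have EA := fun k hk h => eq2A hd hb k hk h
  have EB : ∀ k : ℕ, 0 < k → (d * b) ^ (k + 1) = d * (d * b) ^ k →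
      (d * b) ^ (k + 2) = (d * b) ^ k := fun k _ h => eq2B hd k h
  have EC := fun k hk h => eq2C hd hb k hk h
  refine ⟨?_, ?_, ?_, ?_, ?_, ?_, ?_, ?_, ?_⟩
  · rw [eq01_iff hd k1, eq01_iff hd (min k0 k1)]
    exact part1_gen (d * b) _ PA EA (transA) hk0 hk1 hr
  · rw [eq10_iff hd k1, eq10_iff hd (min k0 k1)]
    exact part1_gen (d * b) _ PB EB (transB) hk0 hk1 hr
  · rw [eq11_iff hd k1, eq11_iff hd (min k0 k1)]
    exact part1_gen (d * b) _ PC EC (transC) hk0 hk1 hr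
  -- (A, B)
  · rw [eq01_iff hd k0, eq10_iff hd k1, eq11_iff hd (min k0 k1)]
    exact part2_gen (d * b) _ _ _ PA PB EA EB
      (fun m _ hA hB => ABtoC m hA hB)
      (fun k hk h => CtoA hd hb k hk h)
      (fun k hk h => CtoB hd hb k hk h)
      transC hk0 hk1
  -- (B, A)
  · rw [eq10_iff hd k0, eq01_iff hd k1, eq11_iff hd (min k0 k1)]
    exact part2_gen (d * b) _ _ _ PB PA EB EA
      (fun m _ hB hA => ABtoC m hA hB)
      (fun k hk h => CtoB hd hb k hk h)
      (fun k hk h => CtoA hd hb k hk h)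
      transC hk0 hk1
  -- (A, C)
  · rw [eq01_iff hd k0, eq11_iff hd k1, eq11_iff hd (min k0 k1)]
    exact part2_gen (d * b) _ _ _ PA PC EA EC
      (fun m _ _ hC => hC)
      (fun k hk h => CtoA hd hb k hk h)
      (fun _ _ h => h)
      transC hk0 hk1
  -- (C, A)
  · rw [eq11_iff hd k0, eq01_iff hd k1, eq11_iff hd (min k0 k1)]
    exact part2_gen (d * b) _ _ _ PC PA EC EA
      (fun m _ hC _ => hC)
      (fun _ _ h => h)
      (fun k hk h => CtoA hd hb k hk h)
      transC hk0 hk1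
  -- (B, C)
  · rw [eq10_iff hd k0, eq11_iff hd k1, eq11_iff hd (min k0 k1)]
    exact part2_gen (d * b) _ _ _ PB PC EB EC
      (fun m _ _ hC => hC)
      (fun k hk h => CtoB hd hb k hk h)
      (fun _ _ h => h)
      transC hk0 hk1
  -- (C, B)
  · rw [eq11_iff hd k0, eq10_iff hd k1, eq11_iff hd (min k0 k1)]
    exact part2_gen (d * b) _ _ _ PC PB EC EB
      (fun m _ hC _ => hC)
      (fun _ _ h => h)
      (fun k hk h => CtoB hd hb k hk h)
      transC hk0 hk1
end

section
/- Let M be a monoid and d, b ∈ M with d·d = 1 and b·b = b, and let k > 0. Then for each i ∈ {01, 10, 11}, the equation eqᵢ•(k) holds if and only if both eqᵢ°(k) and (d·b)^k = (d·b)^(k+1) hold. Explicitly: (d·b)^k = (d·b)^k·d ↔ ((d·b)^k = (d·b)^(k+1)·d ∧ (d·b)^k = (d·b)^(k+1)); (d·b)^k = (b·d)^(k−1)·b ↔ ((d·b)^k = (b·d)^k·b ∧ (d·b)^k = (d·b)^(k+1)); (d·b)^k = (b·d)^(k+1) ↔ ((d·b)^k = (b·d)^k ∧ (d·b)^k = (d·b)^(k+1)).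 -/
private lemma shift_aux {M : Type*} [Monoid M] (a c : M) (n : ℕ) :
    a * (c * a) ^ n = (a * c) ^ n * a := by
  induction n with
  | zero => simp
  | succ n ih =>
    calc a * (c * a) ^ (n + 1) = (a * (c * a) ^ n) * (c * a) := by
          rw [pow_succ, mul_assoc]
      _ = ((a * c) ^ n * a) * (c * a) := by rw [ih]
      _ = (a * c) ^ (n + 1) * a := by
          rw [pow_succ]; simp [mul_assoc]

theorem stmt_10 {M : Type*} [Monoid M] (d b : M) (hd : d * d = 1) (hb : b * b = b)
    (k : ℕ) (hk : 0 < k) :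
    ((d * b) ^ k = (d * b) ^ k * d ↔
      ((d * b) ^ k = (d * b) ^ (k + 1) * d ∧ (d * b) ^ k = (d * b) ^ (k + 1))) ∧
    ((d * b) ^ k = (b * d) ^ (k - 1) * b ↔
      ((d * b) ^ k = (b * d) ^ k * b ∧ (d * b) ^ k = (d * b) ^ (k + 1))) ∧
    ((d * b) ^ k = (b * d) ^ (k + 1) ↔
      ((d * b) ^ k = (b * d) ^ k ∧ (d * b) ^ k = (d * b) ^ (k + 1))) := by
  obtain ⟨m, rfl⟩ : ∃ m, k = m + 1 := ⟨k - 1, (Nat.succ_pred_eq_of_pos hk).symm⟩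
  set x := (d * b) ^ (m + 1) with hx
  -- basic identities
  have hxb : x * b = x := by
    rw [hx, pow_succ, mul_assoc, mul_assoc, hb]
  have hdx : d * x = b * (d * b) ^ m := by
    rw [hx, pow_succ', ← mul_assoc, ← mul_assoc, hd, one_mul]
  have hshift : b * (d * b) ^ m = (b * d) ^ m * b := shift_aux b d m
  have hshift1 : b * x = (b * d) ^ (m + 1) * b := by rw [hx]; exact shift_aux b d (m + 1)
  have hE2 : ∀ n, (b * d) ^ (n + 1) = b * (d * b) ^ n * d := by
    intro n
    rw [pow_succ', mul_assoc, shift_aux d b n, ← mul_assoc]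
  have hbbd : ∀ n, b * (b * d) ^ (n + 1) = (b * d) ^ (n + 1) := by
    intro n
    rw [pow_succ', ← mul_assoc, ← mul_assoc, hb]
  refine ⟨?_, ?_, ?_⟩
  · constructor
    · intro h
      have h1 : x = (d * b) ^ (m + 1 + 1) := by
        rw [pow_succ, ← hx, ← mul_assoc, ← h, hxb]
      refine ⟨?_, h1⟩
      rw [← h1, ← h]
    · rintro ⟨h1, h2⟩
      calc x = (d * b) ^ (m + 1 + 1) * d := h1
        _ = x * d := by rw [← h2]
  · simp only [Nat.add_sub_cancel]
    constructor
    · intro h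
      have hdxx : d * x = x := by
        rw [hdx, hshift, ← h]
      have hbx : b * x = x := by
        calc b * x = b * (d * x) := by rw [hdxx]
          _ = b * (b * (d * b) ^ m) := by rw [hdx]
          _ = b * (d * b) ^ m := by rw [← mul_assoc, hb]
          _ = d * x := hdx.symm
          _ = x := hdxx
      have h1 : x = (b * d) ^ (m + 1) * b := by rw [← hshift1, hbx]
      refine ⟨h1, ?_⟩
      rw [pow_succ', ← hx, mul_assoc, hbx, hdxx]
    · rintro ⟨h1, h2⟩
      have hbx : b * x = x := by rw [hshift1, ← h1]
      have hdxx : d * x = x := by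
        conv_rhs => rw [h2, pow_succ', ← hx, mul_assoc, hbx]
      rw [← hshift, ← hdx, hdxx]
  · constructor
    · intro h
      have hbx : b * x = x := by
        conv_lhs => rw [h, hbbd (m + 1), ← h]
      have hxd : x * d = x := by
        conv_lhs => rw [h, hE2 (m + 1), ← hx, mul_assoc, hd, mul_one, hbx]
      have h2 : x = (d * b) ^ (m + 1 + 1) := by
        rw [pow_succ, ← hx, ← mul_assoc, hxd, hxb]
      have hdxx : d * x = x := by
        conv_rhs => rw [h2, pow_succ', ← hx, mul_assoc, hbx]
      refine ⟨?_, h2⟩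
      rw [hE2 m, ← hdx, hdxx, hxd]
    · rintro ⟨h1, h2⟩
      have hbx : b * x = x := by
        conv_lhs => rw [h1, hbbd m, ← h1]
      have hdxx : d * x = x := by
        conv_rhs => rw [h2, pow_succ', ← hx, mul_assoc, hbx]
      have hfin : (b * d) ^ (m + 1 + 1) = b * x := by
        rw [pow_succ', mul_assoc, ← h1, hdxx]
      exact hbx.symm.trans hfin.symm
end

section
/- Let M be a monoid and d, b ∈ M with d·d = 1 and b·b = b, and let k0, k1, r > 0. Then: (1) for each i ∈ {01, 10, 11}, the conjunction of (d·b)^(k0) = (d·b)^(k0+2r+1) and eqᵢ•(k1) holds if and only if eqᵢ•(min(k0, k1)) holds; (2) for all distinct i, j ∈ {01, 10, 11}, the conjunction eqᵢ•(k0) ∧ eqⱼ•(k1) holds if and only if eq11•(min(k0, k1)) holds. -/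
section Stmt11Aux

variable {M : Type*} [Monoid M] {d b : M}

lemma st11_shift (d b : M) : ∀ n : ℕ, b * (d * b) ^ n = (b * d) ^ n * b
  | 0 => by simp
  | n+1 => by
    rw [pow_succ, ← mul_assoc, st11_shift d b n, pow_succ]
    simp [mul_assoc]

-- x^(n+1) * b = x^(n+1)
lemma st11_xb (hb : b * b = b) (n : ℕ) :
    (d * b) ^ (n + 1) * b = (d * b) ^ (n + 1) := by
  rw [pow_succ, mul_assoc, mul_assoc, hb]

-- d * x^(n+1) = y^n * b
lemma st11_l3 (hd : d * d = 1) (n : ℕ) :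
    d * (d * b) ^ (n + 1) = (b * d) ^ n * b := by
  rw [pow_succ', ← mul_assoc, ← mul_assoc, hd, one_mul, st11_shift]

-- y^(n+1) = b * x^n * d
lemma st11_l4 (d b : M) (n : ℕ) :
    (b * d) ^ (n + 1) = b * (d * b) ^ n * d := by
  rw [st11_shift, pow_succ, mul_assoc]

lemma st11_stabA (hb : b * b = b) (n : ℕ)
    (h : (d * b) ^ (n+1) = (d * b) ^ (n+1) * d) :
    (d * b) ^ (n+1+1) = (d * b) ^ (n+1) := by
  rw [pow_succ, ← mul_assoc, ← h, st11_xb hb]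

lemma st11_babsB (hd : d * d = 1) (hb : b * b = b) (n : ℕ)
    (h : (d * b) ^ (n+1) = d * (d * b) ^ (n+1)) :
    b * (d * b) ^ (n+1) = (d * b) ^ (n+1) := by
  have h2 : (d * b) ^ (n+1) = b * (d * b) ^ n := by
    rw [h, st11_l3 hd, ← st11_shift]
  rw [h2, ← mul_assoc, hb]

lemma st11_stabB (hd : d * d = 1) (hb : b * b = b) (n : ℕ)
    (h : (d * b) ^ (n+1) = d * (d * b) ^ (n+1)) :
    (d * b) ^ (n+1+1) = (d * b) ^ (n+1) := by
  rw [pow_succ', mul_assoc, st11_babsB hd hb n h]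
  exact h.symm

lemma st11_AB_C (hd : d * d = 1) (hb : b * b = b) (n : ℕ)
    (hA : (d * b) ^ (n+1) = (d * b) ^ (n+1) * d)
    (hB : (d * b) ^ (n+1) = d * (d * b) ^ (n+1)) :
    (d * b) ^ (n+1) = b * (d * b) ^ (n+1) * d := by
  rw [st11_babsB hd hb n hB]
  exact hA

lemma st11_C_A (hd : d * d = 1) (hb : b * b = b) (n : ℕ)
    (h : (d * b) ^ (n+1) = b * (d * b) ^ (n+1) * d) :
    ((d * b) ^ (n+1) = (d * b) ^ (n+1) * d ∧ (d * b) ^ (n+1) = d * (d * b) ^ (n+1))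
      ∧ (d * b) ^ (n+1+1) = (d * b) ^ (n+1) := by
  have h2 : (d * b) ^ (n+1) * d = b * (d * b) ^ (n+1) := by
    conv_lhs => rw [h]
    rw [mul_assoc, hd, mul_one]
  have h3 : (d * b) ^ (n+1) = b * (d * b) ^ (n+1) := by
    conv_lhs => rw [h]
    rw [mul_assoc, h2, ← mul_assoc, hb]
  have hA : (d * b) ^ (n+1) = (d * b) ^ (n+1) * d := by rw [h2, ← h3]
  have hst := st11_stabA hb n hA
  have hB : (d * b) ^ (n+1) = d * (d * b) ^ (n+1) := by
    have : d * (d * b) ^ (n+1) = (d * b) ^ (n+1) := by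
      calc d * (d * b) ^ (n+1) = d * (b * (d * b) ^ (n+1)) := by rw [← h3]
        _ = (d * b) ^ (n+1+1) := by rw [← mul_assoc, ← pow_succ']
        _ = (d * b) ^ (n+1) := hst
    exact this.symm
  exact ⟨⟨hA, hB⟩, hst⟩

lemma st11_stab_add (x : M) (k : ℕ) (h : x^(k+1) = x^k) : ∀ t, x^(k+t) = x^k
  | 0 => rfl
  | t+1 => by rw [← add_assoc, pow_succ, st11_stab_add x k h t, ← pow_succ, h]

lemma st11_stab_le (x : M) {k N : ℕ} (hk : k ≤ N) (h : x^(k+1) = x^k) : x^N = x^k := by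
  obtain ⟨t, rfl⟩ := Nat.exists_eq_add_of_le hk
  exact st11_stab_add x k h t

lemma st11_per (x : M) (k l : ℕ) (h : x^(k+l) = x^k) : ∀ t, x^(k+t*l) = x^k
  | 0 => by simp
  | t+1 => by
    rw [Nat.succ_mul, ← add_assoc, pow_add, st11_per x k l h t, ← pow_add, h]

end Stmt11Aux

theorem stmt_11 {M : Type*} [Monoid M] (d b : M) (hd : d * d = 1) (hb : b * b = b)
    (k0 k1 r : ℕ) (hk0 : 0 < k0) (hk1 : 0 < k1) (hr : 0 < r) :
    -- (1) eq00(k0, 2r+1) ∧ eqᵢ•(k1) ↔ eqᵢ•(min k0 k1), for i ∈ {01, 10, 11}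
    (((d * b) ^ k0 = (d * b) ^ (k0 + (2 * r + 1)) ∧ (d * b) ^ k1 = (d * b) ^ k1 * d) ↔
      (d * b) ^ min k0 k1 = (d * b) ^ min k0 k1 * d) ∧
    (((d * b) ^ k0 = (d * b) ^ (k0 + (2 * r + 1)) ∧ (d * b) ^ k1 = (b * d) ^ (k1 - 1) * b) ↔
      (d * b) ^ min k0 k1 = (b * d) ^ (min k0 k1 - 1) * b) ∧
    (((d * b) ^ k0 = (d * b) ^ (k0 + (2 * r + 1)) ∧ (d * b) ^ k1 = (b * d) ^ (k1 + 1)) ↔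
      (d * b) ^ min k0 k1 = (b * d) ^ (min k0 k1 + 1)) ∧
    -- (2) eqᵢ•(k0) ∧ eqⱼ•(k1) ↔ eq11•(min k0 k1), for distinct i, j ∈ {01, 10, 11}
    (((d * b) ^ k0 = (d * b) ^ k0 * d ∧ (d * b) ^ k1 = (b * d) ^ (k1 - 1) * b) ↔
      (d * b) ^ min k0 k1 = (b * d) ^ (min k0 k1 + 1)) ∧
    (((d * b) ^ k0 = (b * d) ^ (k0 - 1) * b ∧ (d * b) ^ k1 = (d * b) ^ k1 * d) ↔
      (d * b) ^ min k0 k1 = (b * d) ^ (min k0 k1 + 1)) ∧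
    (((d * b) ^ k0 = (d * b) ^ k0 * d ∧ (d * b) ^ k1 = (b * d) ^ (k1 + 1)) ↔
      (d * b) ^ min k0 k1 = (b * d) ^ (min k0 k1 + 1)) ∧
    (((d * b) ^ k0 = (b * d) ^ (k0 + 1) ∧ (d * b) ^ k1 = (d * b) ^ k1 * d) ↔
      (d * b) ^ min k0 k1 = (b * d) ^ (min k0 k1 + 1)) ∧
    (((d * b) ^ k0 = (b * d) ^ (k0 - 1) * b ∧ (d * b) ^ k1 = (b * d) ^ (k1 + 1)) ↔
      (d * b) ^ min k0 k1 = (b * d) ^ (min k0 k1 + 1)) ∧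
    (((d * b) ^ k0 = (b * d) ^ (k0 + 1) ∧ (d * b) ^ k1 = (b * d) ^ (k1 - 1) * b) ↔
      (d * b) ^ min k0 k1 = (b * d) ^ (min k0 k1 + 1)) := by
  obtain ⟨a, rfl⟩ : ∃ a, k0 = a + 1 := ⟨k0 - 1, (Nat.succ_pred_eq_of_pos hk0).symm⟩
  obtain ⟨c, rfl⟩ : ∃ c, k1 = c + 1 := ⟨k1 - 1, (Nat.succ_pred_eq_of_pos hk1).symm⟩
  simp only [show min (a+1) (c+1) = min a c + 1 from by omega, Nat.add_sub_cancel]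
  rw [← st11_l3 hd c, ← st11_l3 hd a, ← st11_l3 hd (min a c),
      st11_l4 d b (c+1), st11_l4 d b (a+1), st11_l4 d b (min a c + 1)]
  set m := min a c with hmdef
  have hma : m ≤ a := Nat.min_le_left a c
  have hmc : m ≤ c := Nat.min_le_right a c
  have bridge : (d*b)^(a+1) = (d*b)^(a+1+(2*r+1)) →
      (d*b)^(c+1+1) = (d*b)^(c+1) → (d*b)^(m+1) = (d*b)^(c+1) := by
    intro hper hst
    rcases le_total c a with h | h
    · rw [hmdef, min_eq_right h]
    · rw [hmdef, min_eq_left h]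
      have h1 := st11_per (d*b) (a+1) (2*r+1) hper.symm (c+1)
      have h2 : (d*b)^(a+1+(c+1)*(2*r+1)) = (d*b)^(c+1) := by
        refine st11_stab_le _ ?_ hst
        calc c+1 ≤ (c+1)*(2*r+1) := Nat.le_mul_of_pos_right _ (by omega)
          _ ≤ a+1+(c+1)*(2*r+1) := Nat.le_add_left _ _
      exact h1.symm.trans h2
  have back : (d*b)^(m+1+1) = (d*b)^(m+1) →
      ((d*b)^(a+1) = (d*b)^(a+1+(2*r+1)) ∧ (d*b)^(c+1) = (d*b)^(m+1) ∧
        (d*b)^(a+1) = (d*b)^(m+1)) := by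
    intro hst
    have h0 : (d*b)^(a+1) = (d*b)^(m+1) := st11_stab_le _ (by omega) hst
    have h1 : (d*b)^(c+1) = (d*b)^(m+1) := st11_stab_le _ (by omega) hst
    have h2 : (d*b)^(a+1+(2*r+1)) = (d*b)^(m+1) := st11_stab_le _ (by omega) hst
    exact ⟨h0.trans h2.symm, h1, h0⟩
  have hmin2 : (d*b)^(a+1) = (d*b)^(c+1) →
      ((d*b)^(m+1) = (d*b)^(a+1) ∧ (d*b)^(m+1) = (d*b)^(c+1)) := by
    intro h
    rcases le_total a c with hle | hle
    · rw [hmdef, min_eq_left hle]; exact ⟨rfl, h⟩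
    · rw [hmdef, min_eq_right hle]; exact ⟨h.symm, rfl⟩
  have glue : ∀ {p q : ℕ}, (d*b)^(p+1+1) = (d*b)^(p+1) →
      (d*b)^(q+1+1) = (d*b)^(q+1) → (d*b)^(p+1) = (d*b)^(q+1) := by
    intro p q hp hq
    rcases le_total p q with h | h
    · exact (st11_stab_le _ (by omega) hp).symm
    · exact st11_stab_le _ (by omega) hq
  refine ⟨?_, ?_, ?_, ?_, ?_, ?_, ?_, ?_, ?_⟩
  · constructor
    · rintro ⟨hper, hA⟩
      have hbr := bridge hper (st11_stabA hb c hA)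
      rw [hbr]; exact hA
    · intro hA
      obtain ⟨hper, hc1, _⟩ := back (st11_stabA hb m hA)
      exact ⟨hper, by rw [hc1]; exact hA⟩
  · constructor
    · rintro ⟨hper, hB⟩
      have hbr := bridge hper (st11_stabB hd hb c hB)
      rw [hbr]; exact hB
    · intro hB
      obtain ⟨hper, hc1, _⟩ := back (st11_stabB hd hb m hB)
      exact ⟨hper, by rw [hc1]; exact hB⟩
  · constructor
    · rintro ⟨hper, hC⟩
      have hbr := bridge hper (st11_C_A hd hb c hC).2
      rw [hbr]; exact hC
    · intro hC
      obtain ⟨hper, hc1, _⟩ := back (st11_C_A hd hb m hC).2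
      exact ⟨hper, by rw [hc1]; exact hC⟩
  · constructor
    · rintro ⟨hA, hB⟩
      have hac := glue (st11_stabA hb a hA) (st11_stabB hd hb c hB)
      obtain ⟨hea, hec⟩ := hmin2 hac
      exact st11_AB_C hd hb m (by rw [hea]; exact hA) (by rw [hec]; exact hB)
    · intro hC
      obtain ⟨⟨hA, hB⟩, hst⟩ := st11_C_A hd hb m hC
      obtain ⟨_, hc1, ha1⟩ := back hst
      exact ⟨by rw [ha1]; exact hA, by rw [hc1]; exact hB⟩
  · constructor
    · rintro ⟨hB, hA⟩
      have hac := glue (st11_stabB hd hb a hB) (st11_stabA hb c hA)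
      obtain ⟨hea, hec⟩ := hmin2 hac
      exact st11_AB_C hd hb m (by rw [hec]; exact hA) (by rw [hea]; exact hB)
    · intro hC
      obtain ⟨⟨hA, hB⟩, hst⟩ := st11_C_A hd hb m hC
      obtain ⟨_, hc1, ha1⟩ := back hst
      exact ⟨by rw [ha1]; exact hB, by rw [hc1]; exact hA⟩
  · constructor
    · rintro ⟨hA, hC⟩
      obtain ⟨⟨hA', hB'⟩, hst⟩ := st11_C_A hd hb c hC
      have hac := glue (st11_stabA hb a hA) hst
      obtain ⟨hea, hec⟩ := hmin2 hac
      exact st11_AB_C hd hb m (by rw [hea]; exact hA) (by rw [hec]; exact hB')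
    · intro hC
      obtain ⟨⟨hA, hB⟩, hst⟩ := st11_C_A hd hb m hC
      obtain ⟨_, hc1, ha1⟩ := back hst
      exact ⟨by rw [ha1]; exact hA, by rw [hc1]; exact hC⟩
  · constructor
    · rintro ⟨hC, hA⟩
      obtain ⟨⟨hA', hB'⟩, hst⟩ := st11_C_A hd hb a hC
      have hac := glue hst (st11_stabA hb c hA)
      obtain ⟨hea, hec⟩ := hmin2 hac
      exact st11_AB_C hd hb m (by rw [hec]; exact hA) (by rw [hea]; exact hB')
    · intro hC
      obtain ⟨⟨hA, hB⟩, hst⟩ := st11_C_A hd hb m hC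
      obtain ⟨_, hc1, ha1⟩ := back hst
      exact ⟨by rw [ha1]; exact hC, by rw [hc1]; exact hA⟩
  · constructor
    · rintro ⟨hB, hC⟩
      obtain ⟨⟨hA', hB'⟩, hst⟩ := st11_C_A hd hb c hC
      have hac := glue (st11_stabB hd hb a hB) hst
      obtain ⟨hea, hec⟩ := hmin2 hac
      exact st11_AB_C hd hb m (by rw [hec]; exact hA') (by rw [hea]; exact hB)
    · intro hC
      obtain ⟨⟨hA, hB⟩, hst⟩ := st11_C_A hd hb m hC
      obtain ⟨_, hc1, ha1⟩ := back hst
      exact ⟨by rw [ha1]; exact hB, by rw [hc1]; exact hC⟩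
  · constructor
    · rintro ⟨hC, hB⟩
      obtain ⟨⟨hA', _⟩, hst⟩ := st11_C_A hd hb a hC
      have hac := glue hst (st11_stabB hd hb c hB)
      obtain ⟨hea, hec⟩ := hmin2 hac
      exact st11_AB_C hd hb m (by rw [hea]; exact hA') (by rw [hec]; exact hB)
    · intro hC
      obtain ⟨⟨hA, hB⟩, hst⟩ := st11_C_A hd hb m hC
      obtain ⟨_, hc1, ha1⟩ := back hst
      exact ⟨by rw [ha1]; exact hC, by rw [hc1]; exact hB⟩
end

section
/- Let M be a monoid and d, b ∈ M with d·d = 1 and b·b = b, and let k0, k1 > 0. If (d·b)^(k0) = b·(d·b)^(k0) and (d·b)^(k1) = (d·b)^(k1+1)·d, then (d·b)^m = (b·d)^m where m = max(k0, k1). -/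
theorem stmt_13 {M : Type*} [Monoid M] (d b : M) (hd : d * d = 1) (hb : b * b = b)
    (k0 k1 : ℕ) (hk0 : 0 < k0) (hk1 : 0 < k1)
    (h10 : (d * b) ^ k0 = b * (d * b) ^ k0)
    (h01 : (d * b) ^ k1 = (d * b) ^ (k1 + 1) * d) :
    (d * b) ^ max k0 k1 = (b * d) ^ max k0 k1 := by
  set m := max k0 k1 with hm
  have e0 : k0 + (m - k0) = m := by omega
  have e1 : (m - k1) + k1 = m := by omega
  have hA : (d * b) ^ m = b * (d * b) ^ m := by
    calc (d * b) ^ m = (d * b) ^ k0 * (d * b) ^ (m - k0) := by rw [← pow_add, e0]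
      _ = b * ((d * b) ^ k0 * (d * b) ^ (m - k0)) := by
            conv_lhs => rw [h10]
            rw [mul_assoc]
      _ = b * (d * b) ^ m := by rw [← pow_add, e0]
  have hB : (d * b) ^ m = (d * b) ^ (m + 1) * d := by
    calc (d * b) ^ m = (d * b) ^ (m - k1) * (d * b) ^ k1 := by rw [← pow_add, e1]
      _ = (d * b) ^ (m - k1) * ((d * b) ^ (k1 + 1) * d) := by rw [← h01]
      _ = ((d * b) ^ (m - k1) * (d * b) ^ (k1 + 1)) * d := by rw [mul_assoc]
      _ = (d * b) ^ (m + 1) * d := by rw [← pow_add]; congr 2; omega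
  have hcomm : ∀ n : ℕ, (d * b) ^ n * d = d * (b * d) ^ n := by
    intro n
    induction n with
    | zero => simp
    | succ n ih =>
      rw [pow_succ', mul_assoc, ih, pow_succ']
      simp [mul_assoc]
  have key : (b * d) ^ m = d * ((d * b) ^ m * d) := by
    rw [hcomm m, ← mul_assoc, hd, one_mul]
  have fin : d * ((d * b) ^ m * d) = (d * b) ^ m := by
    conv_lhs => rw [hA]
    rw [← mul_assoc, ← mul_assoc, ← pow_succ', ← hB]
  rw [key, fin]
end

section
/- Let M be a monoid and d, b ∈ M with d·d = 1, b·b = b and b ≠ 1. Then every element x of the submonoid of M generated by {d, b} satisfying x·x = 1 is equal to 1 or to d. In particular, d is the unique involution (other than the identity) of a strict 2-PIM. -/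
theorem stmt_17 {M : Type*} [Monoid M] (d b : M) (hd : d * d = 1) (hb : b * b = b)
    (hb1 : b ≠ 1) :
    ∀ x ∈ Submonoid.closure ({d, b} : Set M), x * x = 1 → x = 1 ∨ x = d := by
  have key : ∀ x ∈ Submonoid.closure ({d, b} : Set M),
      (∃ z, x * z = 1) → x = 1 ∨ x = d := by
    intro x hx
    induction hx using Submonoid.closure_induction with
    | mem y hy =>
      rintro ⟨z, hz⟩
      rcases hy with rfl | rfl
      · exact Or.inr rfl
      · exact absurd (by calc y = y * 1 := (mul_one y).symm
            _ = y * (y * z) := by rw [hz]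
            _ = (y * y) * z := (mul_assoc ..).symm
            _ = y * z := by rw [hb]
            _ = 1 := hz) hb1
    | one => intro _; exact Or.inl rfl
    | mul x y hxm hym ihx ihy =>
      rintro ⟨z, hz⟩
      rw [mul_assoc] at hz
      rcases ihx ⟨y * z, hz⟩ with rfl | hxd
      · rcases ihy ⟨z, by rwa [one_mul] at hz⟩ with rfl | hyd
        · exact Or.inl (one_mul 1)
        · exact Or.inr (by rw [hyd, one_mul])
      · rw [hxd] at hz ⊢
        have hyz : y * z = d := by
          have := congrArg (d * ·) hz
          simpa [← mul_assoc, hd] using this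
        rcases ihy ⟨z * d, by rw [← mul_assoc, hyz, hd]⟩ with rfl | hyd
        · exact Or.inr (mul_one d)
        · exact Or.inl (by rw [hyd]; exact hd)
  intro x hx hxx
  exact key x hx ⟨x, hxx⟩
end

section
/- For integers k, r, k', r' ≥ 1, the presented monoids ⟨d, b ∣ d² = 1, b² = b, (d·b)^k = (d·b)^(k+r)⟩ and ⟨d, b ∣ d² = 1, b² = b, (d·b)^{k'} = (d·b)^{k'+r'}⟩ are isomorphic as monoids if and only if k = k' and r = r'. -/
/-- The free monoid on the two generators `d` (the involution) and `b` (the idempotent). -/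
abbrev F2 : Type := FreeMonoid Bool

/-- The generator `d`. -/
def dF : F2 := FreeMonoid.of true

/-- The generator `b`. -/
def bF : F2 := FreeMonoid.of false

/-- The congruence on the free monoid generated by `d·d ~ 1`, `b·b ~ b`
and the extra relations in `R`. -/
def presCon (R : Set (F2 × F2)) : Con F2 :=
  conGen (fun x y => (x, y) ∈ insert (dF * dF, (1 : F2)) (insert (bF * bF, bF) R))

/-- The monoid presented by `⟨d, b ∣ d² = 1, b² = b, R⟩`. -/
abbrev PresMon (R : Set (F2 × F2)) : Type := (presCon R).Quotient

/-! Write `c = d b`. Every element of `M00(k, r)` is `dᵉ cᵐ dᶠ`, and the relation makes the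
exponent of `c` matter only through its image in the monogenic semigroup of index `k` and
period `r`. Conjugating by `d` and using `d c = b`, `c b = c`, one checks that every element
satisfies `x ^ k = x ^ (k + 2r)`. Conversely, a representation by transformations of `ℕ × Bool`,
in which `c` moves along a tail of length `k` followed by a cycle of length `r`, shows that
`c ^ a = c ^ (a + s)` with `s > 0` forces `k ≤ a`. So `k` is the least exponent `a` for which
some law `x ^ a = x ^ (a + s)` holds, an isomorphism invariant. The same representation,
together with the corresponding right action, separates the `4 (k + r) - 2` normal forms with
`m < k + r`, so the order of the monoid is `4 (k + r) - 2`, which then determines `r`. -/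

-- The representative of `n` in the monogenic semigroup of index `k` and period `r`.
def lasso (k r n : ℕ) : ℕ := if n < k then n else k + (n - k) % r

section lasso

variable {k r : ℕ}

theorem lasso_of_lt {n : ℕ} (h : n < k + r) : lasso k r n = n := by
  unfold lasso
  split_ifs
  · rfl
  · rw [Nat.mod_eq_of_lt (by omega)]; omega

theorem lasso_lt (hr : 0 < r) (n : ℕ) : lasso k r n < k + r := by
  have := Nat.mod_lt (n - k) hr
  unfold lasso; split_ifs <;> omega

theorem lasso_pos (hk : 0 < k) {n : ℕ} (hn : 0 < n) : 0 < lasso k r n := by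
  unfold lasso; split_ifs <;> omega

theorem lasso_add_mul {a : ℕ} (ha : k ≤ a) (t : ℕ) : lasso k r (a + t * r) = lasso k r a := by
  unfold lasso
  rw [if_neg (by omega), if_neg (by omega), Nat.sub_add_comm ha, Nat.add_mul_mod_self_right]

theorem lasso_lasso_add (j n : ℕ) : lasso k r (lasso k r j + n) = lasso k r (j + n) := by
  unfold lasso
  by_cases hj : j < k
  · simp only [if_pos hj]
  · rw [if_neg hj, if_neg (by omega), if_neg (by omega),
      show k + (j - k) % r + n - k = (j - k) % r + n by omega, Nat.mod_add_mod,
      show j - k + n = j + n - k by omega]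

theorem le_of_lasso_eq_lasso_add {a s : ℕ} (hs : 0 < s)
    (h : lasso k r a = lasso k r (a + s)) : k ≤ a := by
  by_contra! ha
  unfold lasso at h
  rw [if_pos ha] at h
  split_ifs at h <;> omega

end lasso

theorem conj_pow_of_mul_self_eq_one {N : Type*} [Monoid N] {u : N} (hu : u * u = 1) (y : N)
    (n : ℕ) : (u * y * u) ^ n = u * y ^ n * u :=
  Units.conj_pow ⟨u, u, hu, hu⟩ y n

@[simp] theorem Function.End.mul_apply {α : Type*} (f g : Function.End α) (x : α) :
    (f * g) x = f (g x) :=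
  rfl

@[simp] theorem Function.End.one_apply {α : Type*} (x : α) : (1 : Function.End α) x = x :=
  rfl

abbrev M00 (k r : ℕ) : Type := PresMon {((dF * bF) ^ k, (dF * bF) ^ (k + r))}

namespace M00

variable {k r : ℕ}

def d (k r : ℕ) : M00 k r := (presCon _).mk' dF

def b (k r : ℕ) : M00 k r := (presCon _).mk' bF

def c (k r : ℕ) : M00 k r := d k r * b k r

theorem mk'_eq_of_mem {x y : F2}
    (h : (x, y) ∈ insert (dF * dF, (1 : F2)) (insert (bF * bF, bF)
      ({((dF * bF) ^ k, (dF * bF) ^ (k + r))} : Set (F2 × F2)))) :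
    (presCon _).mk' x = ((presCon _).mk' y : M00 k r) :=
  (Con.eq _).mpr (ConGen.Rel.of x y h)

theorem d_mul_d : d k r * d k r = 1 := by
  rw [d, ← map_mul, ← map_one (presCon _).mk']
  exact mk'_eq_of_mem (by simp)

theorem b_mul_b : b k r * b k r = b k r := by
  rw [b, ← map_mul]
  exact mk'_eq_of_mem (by simp)

theorem c_pow_add_r : c k r ^ (k + r) = c k r ^ k := by
  rw [c, d, b, ← map_mul, ← map_pow, ← map_pow]
  exact (mk'_eq_of_mem (by simp)).symm

theorem d_mul_c : d k r * c k r = b k r := by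
  rw [c, ← mul_assoc, d_mul_d, one_mul]

theorem c_mul_b : c k r * b k r = c k r := by
  rw [c, mul_assoc, b_mul_b]

theorem c_pow_mul_b {m : ℕ} (hm : m ≠ 0) : c k r ^ m * b k r = c k r ^ m := by
  obtain ⟨n, rfl⟩ := Nat.exists_eq_succ_of_ne_zero hm
  rw [pow_succ, mul_assoc, c_mul_b]

theorem c_pow_add_mul {a : ℕ} (ha : k ≤ a) (t : ℕ) : c k r ^ (a + t * r) = c k r ^ a := by
  induction t with
  | zero => simp
  | succ t ih =>
    obtain ⟨j, rfl⟩ := Nat.exists_eq_add_of_le ha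
    rw [show k + j + (t + 1) * r = j + t * r + (k + r) by ring, pow_add, c_pow_add_r, ← pow_add,
      show j + t * r + k = k + j + t * r by ring, ih]

theorem c_pow_lasso (n : ℕ) : c k r ^ lasso k r n = c k r ^ n := by
  unfold lasso
  split_ifs with hn
  · rfl
  · rw [← c_pow_add_mul (by omega : k ≤ k + (n - k) % r) ((n - k) / r)]
    have := Nat.div_add_mod' (n - k) r
    congr 1
    omega

section lift

variable {N : Type*} [Monoid N] {δ β : N}

theorem presCon_le_ker (hδ : δ * δ = 1) (hβ : β * β = β)
    (hrel : (δ * β) ^ k = (δ * β) ^ (k + r)) :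
    presCon {((dF * bF) ^ k, (dF * bF) ^ (k + r))} ≤
      Con.ker (FreeMonoid.lift fun x => if x then δ else β) :=
  Con.conGen_le.mpr <| by
    rintro x y (h | h | h) <;> simp only [Set.mem_singleton_iff, Prod.mk.injEq] at h <;>
      obtain ⟨rfl, rfl⟩ := h <;> simp [Con.ker_rel, dF, bF, hδ, hβ, hrel]

def lift (hδ : δ * δ = 1) (hβ : β * β = β) (hrel : (δ * β) ^ k = (δ * β) ^ (k + r)) :
    M00 k r →* N :=
  Con.lift _ (FreeMonoid.lift fun x => if x then δ else β) (presCon_le_ker hδ hβ hrel)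

variable (hδ : δ * δ = 1) (hβ : β * β = β) (hrel : (δ * β) ^ k = (δ * β) ^ (k + r))

theorem lift_d : lift hδ hβ hrel (d k r) = δ := by
  rw [lift, d, Con.lift_mk']; simp [dF]

theorem lift_b : lift hδ hβ hrel (b k r) = β := by
  rw [lift, b, Con.lift_mk']; simp [bF]

theorem lift_c : lift hδ hβ hrel (c k r) = δ * β := by
  rw [c, map_mul, lift_d, lift_b]

end lift

def nf (k r : ℕ) : Bool × ℕ × Bool → M00 k r
  | (e, m, f) => (if e then d k r else 1) * c k r ^ m * (if f then d k r else 1)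

theorem lift_nf {N : Type*} [Monoid N] {δ β : N} (hδ : δ * δ = 1) (hβ : β * β = β)
    (hrel : (δ * β) ^ k = (δ * β) ^ (k + r)) (i : Bool × ℕ × Bool) :
    lift hδ hβ hrel (nf k r i) =
      (if i.1 then δ else 1) * (δ * β) ^ i.2.1 * (if i.2.2 then δ else 1) := by
  obtain ⟨e, m, f⟩ := i
  simp only [nf, map_mul, map_pow, apply_ite (lift hδ hβ hrel), map_one, lift_d, lift_c]

theorem d_mul_nf (e : Bool) (m : ℕ) (f : Bool) :
    d k r * nf k r (e, m, f) = nf k r (!e, m, f) := by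
  cases e <;> simp [nf, ← mul_assoc, d_mul_d]

theorem b_mul_d_mul_c_pow (m : ℕ) :
    b k r * d k r * c k r ^ (m + 1) = d k r * c k r ^ (m + 1) := by
  rw [pow_succ', mul_assoc, ← mul_assoc (d k r), d_mul_c, ← mul_assoc, b_mul_b, ← d_mul_c,
    mul_assoc]

theorem b_mul_nf (e : Bool) (m : ℕ) (f : Bool) :
    ∃ i, b k r * nf k r (e, m, f) = nf k r i := by
  cases e
  · exact ⟨(true, m + 1, f), by simp [nf, ← d_mul_c, pow_succ', mul_assoc]⟩
  · cases m with
    | zero => exact ⟨(true, 1, !f), by cases f <;> simp [nf, ← d_mul_c, mul_assoc, d_mul_d]⟩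
    | succ m =>
      refine ⟨(true, m + 1, f), ?_⟩
      simp only [nf, if_true, ← mul_assoc, b_mul_d_mul_c_pow]

theorem exists_nf (x : M00 k r) : ∃ i, x = nf k r i := by
  obtain ⟨w, rfl⟩ := (presCon _).mk'_surjective x
  induction w using FreeMonoid.inductionOn' with
  | one => exact ⟨(false, 0, false), by simp [nf]⟩
  | of_mul g w ih =>
    obtain ⟨⟨e, m, f⟩, hw⟩ := ih
    rw [map_mul, hw]
    cases g
    · exact b_mul_nf e m f
    · exact ⟨_, d_mul_nf e m f⟩

theorem c_pow_succ_mul_d_pow (j n : ℕ) :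
    (c k r ^ (j + 1) * d k r) ^ (n + 1) = c k r ^ (j + 1 + n * j) * d k r := by
  induction n with
  | zero => simp
  | succ n ih =>
    calc (c k r ^ (j + 1) * d k r) ^ (n + 1 + 1)
        = c k r ^ (j + 1 + n * j) * (d k r * c k r) * c k r ^ j * d k r := by
          rw [pow_succ, ih, pow_succ' (c k r) j]; simp only [mul_assoc]
      _ = c k r ^ (j + 1 + n * j + j) * d k r := by
          rw [d_mul_c, c_pow_mul_b (by omega), pow_add _ _ j]
      _ = c k r ^ (j + 1 + (n + 1) * j) * d k r := by ring_nf

theorem pow_eq_pow_add_two_mul_of_c_pow_mul (hk : 0 < k) (m : ℕ) (g : Bool) :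
    (c k r ^ m * (if g then d k r else 1)) ^ k =
      (c k r ^ m * (if g then d k r else 1)) ^ (k + 2 * r) := by
  cases g with
  | false =>
    rcases Nat.eq_zero_or_pos m with rfl | hm
    · simp
    · simp only [Bool.false_eq_true, if_false, mul_one, ← pow_mul,
        show m * (k + 2 * r) = m * k + 2 * m * r by ring]
      exact (c_pow_add_mul (Nat.le_mul_of_pos_left k hm) _).symm
  | true =>
    obtain ⟨n, rfl⟩ : ∃ n, k = n + 1 := ⟨k - 1, by omega⟩
    obtain _ | j := m
    · simp [pow_add, pow_mul, sq, d_mul_d]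
    · rw [if_pos rfl, show n + 1 + 2 * r = n + 2 * r + 1 by ring, c_pow_succ_mul_d_pow,
        c_pow_succ_mul_d_pow]
      rcases Nat.eq_zero_or_pos j with rfl | hj
      · simp
      · rw [show j + 1 + (n + 2 * r) * j = j + 1 + n * j + 2 * j * r by ring,
          c_pow_add_mul (by nlinarith)]

theorem pow_eq_pow_add_two_mul (hk : 0 < k) (x : M00 k r) : x ^ k = x ^ (k + 2 * r) := by
  obtain ⟨⟨e, m, f⟩, rfl⟩ := exists_nf x
  set u : M00 k r := if e then d k r else 1
  have hu : u * u = 1 := by cases e <;> simp [u, d_mul_d]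
  have hconj : nf k r (e, m, f) = u * (c k r ^ m * if e != f then d k r else 1) * u := by
    cases e <;> cases f <;> simp [u, nf, mul_assoc, d_mul_d]
  rw [hconj, conj_pow_of_mul_self_eq_one hu, conj_pow_of_mul_self_eq_one hu,
    pow_eq_pow_add_two_mul_of_c_pow_mul hk]

-- On the points `(i, false)`, `cAct` below is the successor on the lasso
-- `0 → 1 → ⋯ → k + r - 1 → k`.
def dAct (k r : ℕ) : Function.End (ℕ × Bool) :=
  fun p => if 1 ≤ p.1 ∧ p.1 < k + r then (p.1, !p.2) else p

def bAct (k r : ℕ) : Function.End (ℕ × Bool) :=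
  fun p => if p.2 then p else (lasso k r (p.1 + 1), true)

abbrev cAct (k r : ℕ) : Function.End (ℕ × Bool) := dAct k r * bAct k r

theorem dAct_of_mem {i : ℕ} (h : 1 ≤ i ∧ i < k + r) (x : Bool) : dAct k r (i, x) = (i, !x) :=
  if_pos h

theorem dAct_of_not_mem {i : ℕ} (h : ¬(1 ≤ i ∧ i < k + r)) (x : Bool) :
    dAct k r (i, x) = (i, x) :=
  if_neg h

theorem dAct_mul_self : dAct k r * dAct k r = 1 := by
  funext ⟨i, x⟩
  by_cases h : 1 ≤ i ∧ i < k + r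
  · simp [dAct_of_mem h]
  · simp [dAct_of_not_mem h]

theorem bAct_mul_self : bAct k r * bAct k r = bAct k r := by
  funext ⟨i, x⟩
  cases x <;> simp [bAct]

theorem cAct_false (hk : 0 < k) (hr : 0 < r) (i : ℕ) :
    cAct k r (i, false) = (lasso k r (i + 1), false) := by
  simp [cAct, bAct, dAct_of_mem ⟨lasso_pos hk (Nat.succ_pos i), lasso_lt hr _⟩]

theorem cAct_pow_lasso (hk : 0 < k) (hr : 0 < r) (j n : ℕ) :
    (cAct k r ^ n) (lasso k r j, false) = (lasso k r (j + n), false) := by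
  induction n with
  | zero => rfl
  | succ n ih =>
    rw [pow_succ', Function.End.mul_apply, ih, cAct_false hk hr, lasso_lasso_add, add_assoc]

theorem cAct_pow_apply_zero (hk : 0 < k) (hr : 0 < r) (n : ℕ) :
    (cAct k r ^ n) (0, false) = (lasso k r n, false) := by
  simpa [lasso_of_lt (by omega : 0 < k + r)] using cAct_pow_lasso hk hr 0 n

theorem cAct_pow_fixed {i : ℕ} (h : ¬(1 ≤ i ∧ i < k + r)) (n : ℕ) :
    (cAct k r ^ n) (i, true) = (i, true) :=
  Function.iterate_fixed (by simp [cAct, bAct, dAct_of_not_mem h]) n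

theorem cAct_pow_add (hk : 0 < k) (hr : 0 < r) : cAct k r ^ (k + r) = cAct k r ^ k := by
  obtain ⟨n, rfl⟩ : ∃ n, k = n + 1 := ⟨k - 1, by omega⟩
  have period (j : ℕ) (hj : 1 ≤ j) :
      (cAct (n + 1) r ^ (n + r)) (lasso (n + 1) r j, false) =
        (cAct (n + 1) r ^ n) (lasso (n + 1) r j, false) := by
    rw [cAct_pow_lasso hk hr, cAct_pow_lasso hk hr, show j + (n + r) = j + n + 1 * r by ring,
      lasso_add_mul (by omega)]
  funext ⟨i, x⟩
  rw [show n + 1 + r = n + r + 1 by ring, pow_succ, pow_succ, Function.End.mul_apply,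
    Function.End.mul_apply]
  cases x with
  | false => rw [cAct_false hk hr, period _ (by omega)]
  | true =>
    by_cases h : 1 ≤ i ∧ i < n + 1 + r
    · have hc : cAct (n + 1) r (i, true) = (lasso (n + 1) r i, false) := by
        simp [cAct, bAct, dAct_of_mem h, lasso_of_lt h.2]
      rw [hc, period _ (by omega)]
    · have hc : cAct (n + 1) r (i, true) = (i, true) := cAct_pow_fixed h 1
      rw [hc, cAct_pow_fixed h, cAct_pow_fixed h]

theorem bAct_mul_dAct : bAct k r * dAct k r = dAct k r * cAct k r * dAct k r := by
  rw [cAct, ← mul_assoc (dAct k r), dAct_mul_self, one_mul]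

theorem bAct_mul_dAct_apply_of_mem (hk : 0 < k) (hr : 0 < r) {i : ℕ} (h : 1 ≤ i ∧ i < k + r)
    (x : Bool) : ∃ j, (1 ≤ j ∧ j < k + r) ∧ (bAct k r * dAct k r) (i, x) = (j, true) := by
  cases x
  · exact ⟨i, h, by simp [dAct_of_mem h, bAct]⟩
  · exact ⟨lasso k r (i + 1), ⟨lasso_pos hk (Nat.succ_pos i), lasso_lt hr _⟩,
      by simp [dAct_of_mem h, bAct]⟩

theorem bAct_mul_dAct_pow_succ_apply_of_mem (hk : 0 < k) (hr : 0 < r) {i : ℕ}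
    (h : 1 ≤ i ∧ i < k + r) (x : Bool) (n : ℕ) :
    ∃ j, (1 ≤ j ∧ j < k + r) ∧ ((bAct k r * dAct k r) ^ (n + 1)) (i, x) = (j, true) := by
  induction n with
  | zero => simpa using bAct_mul_dAct_apply_of_mem hk hr h x
  | succ n ih =>
    obtain ⟨j, hj, hpow⟩ := ih
    rw [pow_succ', Function.End.mul_apply, hpow]
    exact bAct_mul_dAct_apply_of_mem hk hr hj true

def phi (hk : 0 < k) (hr : 0 < r) : M00 k r →* Function.End (ℕ × Bool) :=
  lift dAct_mul_self bAct_mul_self (cAct_pow_add hk hr).symm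

-- `phi` identifies `c ^ k` with `c ^ k * d` when `r = 1`; the right action reads off the last `d`.
open MulOpposite in
def psi (hk : 0 < k) (hr : 0 < r) : M00 k r →* (Function.End (ℕ × Bool))ᵐᵒᵖ :=
  lift (δ := op (dAct k r)) (β := op (bAct k r))
    (by rw [← op_mul, dAct_mul_self, op_one]) (by rw [← op_mul, bAct_mul_self])
    (by rw [← op_mul, ← op_pow, ← op_pow, bAct_mul_dAct,
      conj_pow_of_mul_self_eq_one dAct_mul_self, conj_pow_of_mul_self_eq_one dAct_mul_self,
      cAct_pow_add hk hr])

-- The two indices removed are the repetitions `d * c ^ 0 = d` and `d * c ^ 0 * d = 1`.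
def nfIndex (k r : ℕ) : Finset (Bool × ℕ × Bool) :=
  (Finset.univ ×ˢ Finset.range (k + r) ×ˢ Finset.univ) \ {(true, 0, false), (true, 0, true)}

theorem mem_nfIndex {e : Bool} {m : ℕ} {f : Bool} :
    (e, m, f) ∈ nfIndex k r ↔ m < k + r ∧ (e → m ≠ 0) := by
  cases e <;> cases f <;> simp [nfIndex]

theorem card_nfIndex (hk : 0 < k) : (nfIndex k r).card = 4 * (k + r) - 2 := by
  rw [nfIndex, Finset.card_sdiff_of_subset (by intro i; aesop)]
  simp
  omega

theorem phi_nf (hk : 0 < k) (hr : 0 < r) {e : Bool} {m : ℕ} {f : Bool}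
    (h : (e, m, f) ∈ nfIndex k r) : phi hk hr (nf k r (e, m, f)) (0, false) = (m, e) := by
  rw [mem_nfIndex] at h
  have hc : (cAct k r ^ m) (0, false) = (m, false) := by
    rw [cAct_pow_apply_zero hk hr, lasso_of_lt h.1]
  have hd : dAct k r (0, false) = (0, false) := dAct_of_not_mem (by omega) _
  rw [phi, lift_nf]
  cases e
  · cases f <;> simp [hc, hd]
  · have hm : 1 ≤ m ∧ m < k + r := ⟨Nat.one_le_iff_ne_zero.mpr (h.2 rfl), h.1⟩
    cases f <;> simp [hc, hd, dAct_of_mem hm]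

theorem psi_nf (hk : 0 < k) (hr : 0 < r) {e : Bool} {m : ℕ} {f : Bool}
    (h : (e, m, f) ∈ nfIndex k r) : ((psi hk hr (nf k r (e, m, f))).unop (1, true)).2 = !f := by
  rw [mem_nfIndex] at h
  have h1 : 1 ≤ 1 ∧ 1 < k + r := ⟨le_rfl, by omega⟩
  rw [psi, lift_nf]
  simp only [MulOpposite.unop_mul, MulOpposite.unop_pow, apply_ite MulOpposite.unop,
    MulOpposite.unop_op, MulOpposite.unop_one, Function.End.mul_apply]
  obtain _ | n := m
  · obtain rfl : e = false := by simpa using h.2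
    cases f <;> simp [dAct_of_mem h1]
  · obtain ⟨j, hj, hpow⟩ :=
      bAct_mul_dAct_pow_succ_apply_of_mem hk hr h1 (!e) n
    have hpt : (if e then dAct k r else 1) (1, true) = (1, !e) := by
      cases e <;> simp [dAct_of_mem h1]
    rw [hpt, hpow]
    cases f <;> simp [dAct_of_mem hj]

theorem nf_injOn (hk : 0 < k) (hr : 0 < r) : Set.InjOn (nf k r) (nfIndex k r) := by
  rintro ⟨e, m, f⟩ h ⟨e', m', f'⟩ h' heq
  have hphi := congrArg (fun x => phi hk hr x (0, false)) heq
  have hpsi := congrArg (fun x => ((psi hk hr x).unop (1, true)).2) heq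
  simp only [phi_nf hk hr h, phi_nf hk hr h', psi_nf hk hr h, psi_nf hk hr h', Prod.mk.injEq,
    Bool.not_inj_iff] at hphi hpsi
  obtain ⟨rfl, rfl⟩ := hphi
  rw [hpsi]

theorem exists_mem_nfIndex (hr : 0 < r) (x : M00 k r) : ∃ i ∈ nfIndex k r, nf k r i = x := by
  obtain ⟨⟨e, m, f⟩, rfl⟩ := exists_nf x
  have hm : nf k r (e, lasso k r m, f) = nf k r (e, m, f) := by simp only [nf, c_pow_lasso]
  by_cases h0 : e ∧ lasso k r m = 0
  · obtain ⟨rfl, h0⟩ := h0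
    refine ⟨(false, 0, !f), mem_nfIndex.mpr ⟨by omega, by simp⟩, ?_⟩
    rw [← hm, h0]
    cases f <;> simp [nf, d_mul_d]
  · exact ⟨_, mem_nfIndex.mpr ⟨lasso_lt hr m, by simpa using h0⟩, hm⟩

theorem natCard_eq (hk : 0 < k) (hr : 0 < r) : Nat.card (M00 k r) = 4 * (k + r) - 2 := by
  have himage : nf k r '' nfIndex k r = Set.univ := Set.eq_univ_of_forall fun x => by
    obtain ⟨i, hi, rfl⟩ := exists_mem_nfIndex hr x
    exact ⟨i, hi, rfl⟩
  rw [← Set.ncard_univ, ← himage, (nf_injOn hk hr).ncard_image, Set.ncard_coe_finset,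
    card_nfIndex hk]

theorem le_of_c_pow_eq (hk : 0 < k) (hr : 0 < r) {a s : ℕ} (hs : 0 < s)
    (h : c k r ^ a = c k r ^ (a + s)) : k ≤ a := by
  have := congrArg (fun x => phi hk hr x (0, false)) h
  simp only [map_pow, phi, lift_c, cAct_pow_apply_zero hk hr, Prod.mk.injEq, and_true] at this
  exact le_of_lasso_eq_lasso_add hs this

theorem le_of_mulEquiv {k' r' : ℕ} (hk : 0 < k) (hr : 0 < r) (hk' : 0 < k') (hr' : 0 < r')
    (e : M00 k r ≃* M00 k' r') : k' ≤ k := by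
  have h := pow_eq_pow_add_two_mul hk (e.symm (c k' r'))
  rw [← map_pow, ← map_pow, e.symm.injective.eq_iff] at h
  exact le_of_c_pow_eq hk' hr' (by omega) h

end M00

/-- `M00(k, r) ≅ M00(k', r')` if and only if `k = k'` and `r = r'`. -/
theorem stmt_18 (k r k' r' : ℕ) (hk : 1 ≤ k) (hr : 1 ≤ r) (hk' : 1 ≤ k') (hr' : 1 ≤ r') :
    Nonempty (PresMon {((dF * bF) ^ k, (dF * bF) ^ (k + r))} ≃*
        PresMon {((dF * bF) ^ k', (dF * bF) ^ (k' + r'))}) ↔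
      (k = k' ∧ r = r') := by
  constructor
  · rintro ⟨e⟩
    have hle := M00.le_of_mulEquiv hk hr hk' hr' e
    have hge := M00.le_of_mulEquiv hk' hr' hk hr e.symm
    have hcard := Nat.card_congr e.toEquiv
    rw [M00.natCard_eq hk hr, M00.natCard_eq hk' hr'] at hcard
    omega
  · rintro ⟨rfl, rfl⟩
    exact ⟨MulEquiv.refl _⟩
end
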